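/- arXiv:2208.12732 — 11 statements merged into one kernel-verified Lean document; each statement's English description precedes it below -/
import Mathlib

section
/- Let (X,≤) be a finite median join-semilattice with median operation μ and median-induced betweenness intervals I^μ, and let f : X^N → X be an aggregation rule for a finite set N of agents. Then the following are equivalent: (i) f is strategy-proof on D^N for every rich domain D of locally unimodal preorders with respect to the median betweenness on X; (ii) f is B_μ-monotonic, i.e. for all i ∈ N, y_i ∈ X and x_N ∈ X^N, f(x_N) ∈ I^μ(x_i, f(y_i, x_{N∖{i}})); (iii) f is monotonically M_X-independent, i.e. for all profiles x_N, y_N ∈ X^N and every meet-irreducible m of X, if {i : x_i ≤ m} ⊆ {i : y_i ≤ m} and f(x_N) ≤ m then f(y_N) ≤ m. -/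
/-- A preorder (reflexive transitive relation) on `X`, used as an agent's
preference over outcomes. -/
structure Pref (X : Type*) where
  rel : X → X → Prop
  refl : ∀ x, rel x x
  trans : ∀ x y z, rel x y → rel y z → rel x z

namespace Pref

/-- Strict (asymmetric) part of a preference preorder. -/
def strict {X : Type*} (R : Pref X) (x y : X) : Prop := R.rel x y ∧ ¬ R.rel y x

/-- `t` is the unique maximum of the preorder `R`. -/
def IsTop {X : Type*} (R : Pref X) (t : X) : Prop :=
  (∀ y, R.rel t y) ∧ ∀ t', (∀ y, R.rel t' y) → t' = t

end Pref

/-- The interval `I^μ(x,y) = {z : z = μ(x,y,z)}` induced by a ternary median operation. -/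
def medInterval {X : Type*} (μ : X → X → X → X) (x y : X) : Set X :=
  {z | μ x y z = z}

/-- A preorder on `X` is locally unimodal (single-peaked) w.r.t. the betweenness induced
by the median `μ`: it has a unique maximum `t`, and any outcome lying strictly between
`t` and another outcome `y` is not worse than `y`. -/
def LocallyUnimodal {X : Type*} (μ : X → X → X → X) (R : Pref X) : Prop :=
  ∃ t, R.IsTop t ∧ ∀ y z, z ∈ medInterval μ t y → z ≠ t → ¬ R.strict y z

/-- A rich domain of locally unimodal preorders: for all `x,y` it contains a preorder
with top `x` whose upper contour set at `y` is exactly the interval `I^μ(x,y)`. -/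
def RichDomain {X : Type*} (μ : X → X → X → X) (D : Set (Pref X)) : Prop :=
  (∀ R ∈ D, LocallyUnimodal μ R) ∧
  ∀ x y : X, ∃ R ∈ D, R.IsTop x ∧ {z | R.rel z y} = medInterval μ x y

/-- Strategy-proofness of an aggregation rule on profiles drawn from the domain `D`:
no agent `i` whose true preference lies in `D` (with top `tops i`) can strictly gain
by reporting `y` instead of her top. -/
def StrategyProofOn {X N : Type*} [DecidableEq N]
    (f : (N → X) → X) (D : Set (Pref X)) : Prop :=
  ∀ prefs : N → Pref X, (∀ i, prefs i ∈ D) →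
    ∀ tops : N → X, (∀ j, (prefs j).IsTop (tops j)) →
      ∀ (i : N) (y : X),
        ¬ (prefs i).strict (f (Function.update tops i y)) (f tops)

/-- `B_μ`-monotonicity: `f(x_N)` always lies in the median interval between `x_i` and
the outcome obtained when `i` deviates to `y`. -/
def BMuMonotonic {X N : Type*} [DecidableEq N]
    (μ : X → X → X → X) (f : (N → X) → X) : Prop :=
  ∀ (x : N → X) (i : N) (y : X),
    f x ∈ medInterval μ (x i) (f (Function.update x i y))

/-- `m` is meet-irreducible: whenever `m` is the greatest lower bound of a set `Y`,
`m` itself belongs to `Y`. -/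
def MeetIrred {X : Type*} [Preorder X] (m : X) : Prop :=
  ∀ Y : Set X, IsGLB Y m → m ∈ Y

/-- `j` is join-irreducible: whenever `j` is the least upper bound of a set `Y`,
`j` itself belongs to `Y`. -/
def JoinIrred {X : Type*} [Preorder X] (j : X) : Prop :=
  ∀ Y : Set X, IsLUB Y j → j ∈ Y

/-- Monotonic `M_X`-independence of an aggregation rule. -/
def MonotonicMIndependent {X N : Type*} [Preorder X] (f : (N → X) → X) : Prop :=
  ∀ (x y : N → X) (m : X), MeetIrred m →
    {i | x i ≤ m} ⊆ {i | y i ≤ m} → f x ≤ m → f y ≤ m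

/-- Upper distributivity: every principal order filter `↑u` is a distributive lattice,
expressed by the identity `x ⊔ (y ⊓ z) = (x ⊔ y) ⊓ (x ⊔ z)` for elements above a
common lower bound `u` (meets expressed via `IsGLB`). -/
def UpperDistributive (X : Type*) [SemilatticeSup X] : Prop :=
  ∀ u x y z m₁ m₂ : X, u ≤ x → u ≤ y → u ≤ z →
    IsGLB {y, z} m₁ → IsGLB {x ⊔ y, x ⊔ z} m₂ → x ⊔ m₁ = m₂

/-- Co-coronation (meet-Helly): if the three pairwise meets of `x,y,z` exist then the
meet of `{x,y,z}` exists. -/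
def MeetHelly (X : Type*) [SemilatticeSup X] : Prop :=
  ∀ x y z : X, (∃ a, IsGLB {x, y} a) → (∃ b, IsGLB {y, z} b) →
    (∃ c, IsGLB {x, z} c) → ∃ d, IsGLB ({x, y, z} : Set X) d

/-- `μ` is the median operation: `μ(x,y,z)` is the meet of `x⊔y`, `y⊔z`, `x⊔z`. -/
def IsMedianFn {X : Type*} [SemilatticeSup X] (μ : X → X → X → X) : Prop :=
  ∀ x y z : X, IsGLB {x ⊔ y, y ⊔ z, x ⊔ z} (μ x y z)

/-- Anonymity: invariance of the rule under permutations of the agents. -/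
def Anonymous {X N : Type*} (f : (N → X) → X) : Prop :=
  ∀ (x : N → X) (σ : Equiv.Perm N), f (x ∘ σ) = f x

/-- Bi-idempotence: if every agent proposes one of the two outcomes `y, z`, the rule
selects one of `y, z`. -/
def BiIdempotent {X N : Type*} (f : (N → X) → X) : Prop :=
  ∀ (x : N → X) (y z : X), (∀ i, x i = y ∨ x i = z) → f x = y ∨ f x = z

/-- The co-majority rule: `f(x_N)` is the meet over all majority coalitions `S`
(of size at least `⌊(|N|+2)/2⌋`) of the joins `⋁_{i ∈ S} x_i`. -/
def IsCoMajority {X N : Type*} [SemilatticeSup X] [Fintype N] (f : (N → X) → X) : Prop :=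
  ∀ x : N → X,
    IsGLB {z | ∃ S : Finset N, (Fintype.card N + 2) / 2 ≤ S.card ∧ IsLUB (x '' ↑S) z} (f x)

/-- An order filter of the poset of coalitions `(P(N), ⊆)`. -/
def OrderFilterN {N : Type*} (F : Set (Set N)) : Prop :=
  ∀ S T : Set N, S ∈ F → S ⊆ T → T ∈ F

/-- The locally `m`-winning coalitions of the rule `f`. -/
def winningCoalitions {X N : Type*} [Preorder X] (f : (N → X) → X) (m : X) : Set (Set N) :=
  {T | ∃ x : N → X, {i | x i ≤ m} = T ∧ f x ≤ m}

/-- Shortest-path distance in the covering graph of a partial order. -/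
noncomputable def covDist {X : Type*} [PartialOrder X] (x y : X) : ℕ :=
  sInf {n | ∃ p : ℕ → X, p 0 = x ∧ p n = y ∧ ∀ k < n, p k ⋖ p (k + 1) ∨ p (k + 1) ⋖ p k}


section AuxMedian

variable {X : Type*} [SemilatticeSup X] [Fintype X]

lemma aux_exists_isGLB (S : Set X) (l : X) (hl : l ∈ lowerBounds S) : ∃ g, IsGLB S g := by
  classical
  have hfin : (lowerBounds S).Finite := Set.toFinite _
  have hne : hfin.toFinset.Nonempty := ⟨l, hfin.mem_toFinset.mpr hl⟩
  refine ⟨hfin.toFinset.sup' hne id, ?_, ?_⟩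
  · intro s hs
    exact Finset.sup'_le _ _ (fun t ht => (hfin.mem_toFinset.mp ht) hs)
  · intro c hc
    exact Finset.le_sup' (f := id) (hfin.mem_toFinset.mpr hc)

lemma aux_glb_mi (b : X) : IsGLB {m : X | MeetIrred m ∧ b ≤ m} b := by
  refine WellFounded.induction wellFounded_gt
    (C := fun b => IsGLB {m : X | MeetIrred m ∧ b ≤ m} b) b ?_
  intro b IH
  constructor
  · exact fun m hm => hm.2
  · intro c hc
    by_cases hb : MeetIrred b
    · exact hc ⟨hb, le_rfl⟩
    · simp only [MeetIrred, not_forall] at hb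
      obtain ⟨Y, hY, hbY⟩ := hb
      refine hY.2 (fun y hy => ?_)
      have hlt : b < y := lt_of_le_of_ne (hY.1 hy) (fun h => hbY (h ▸ hy))
      exact (IH y hlt).2 (fun m hm => hc ⟨hm.1, hlt.le.trans hm.2⟩)

lemma aux_le_iff_mi (a b : X) : a ≤ b ↔ ∀ m : X, MeetIrred m → b ≤ m → a ≤ m :=
  ⟨fun h m _ hbm => h.trans hbm,
   fun h => (aux_glb_mi b).2 (fun m hm => h m hm.1 hm.2)⟩

lemma aux_prime2 (hud : UpperDistributive X) {m a b g : X} (hm : MeetIrred m)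
    (hg : IsGLB {a, b} g) (hgm : g ≤ m) : a ≤ m ∨ b ≤ m := by
  have ha : g ≤ a := hg.1 (by simp)
  have hb : g ≤ b := hg.1 (by simp)
  obtain ⟨m2, hm2⟩ := aux_exists_isGLB {m ⊔ a, m ⊔ b} m (by
    intro s hs
    simp only [Set.mem_insert_iff, Set.mem_singleton_iff] at hs
    rcases hs with rfl | rfl <;> exact le_sup_left)
  have hdist := hud g m a b g m2 hgm ha hb hg hm2
  have hm2m : m2 = m := hdist.symm.trans (sup_eq_left.mpr hgm)
  rw [hm2m] at hm2
  have := hm _ hm2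
  simp only [Set.mem_insert_iff, Set.mem_singleton_iff] at this
  rcases this with h | h
  · exact Or.inl (by rw [h]; exact le_sup_right)
  · exact Or.inr (by rw [h]; exact le_sup_right)

lemma aux_glb_pair_of_triple {p q r g t : X} (hg : IsGLB {p, q} g)
    (ht : IsGLB ({p, q, r} : Set X) t) : IsGLB {g, r} t := by
  constructor
  · intro s hs
    simp only [Set.mem_insert_iff, Set.mem_singleton_iff] at hs
    rcases hs with rfl | rfl
    · exact hg.2 (fun w hw => ht.1 (by
        simp only [Set.mem_insert_iff, Set.mem_singleton_iff] at hw ⊢; tauto))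
    · exact ht.1 (by simp)
  · intro c hc
    have hcg : c ≤ g := hc (by simp)
    have hcr : c ≤ r := hc (by simp)
    refine ht.2 ?_
    intro w hw
    simp only [Set.mem_insert_iff, Set.mem_singleton_iff] at hw
    rcases hw with rfl | rfl | rfl
    · exact hcg.trans (hg.1 (by simp))
    · exact hcg.trans (hg.1 (by simp))
    · exact hcr

lemma aux_prime3 (hud : UpperDistributive X) {μ : X → X → X → X} (hμ : IsMedianFn μ)
    {m x y z : X} (hm : MeetIrred m) (h : μ x y z ≤ m) :
    x ⊔ y ≤ m ∨ y ⊔ z ≤ m ∨ x ⊔ z ≤ m := by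
  obtain ⟨g, hg⟩ := aux_exists_isGLB {x ⊔ y, y ⊔ z} (μ x y z) (by
    intro s hs
    simp only [Set.mem_insert_iff, Set.mem_singleton_iff] at hs
    rcases hs with rfl | rfl <;> exact (hμ x y z).1 (by simp))
  have h2 : IsGLB {g, x ⊔ z} (μ x y z) := aux_glb_pair_of_triple hg (hμ x y z)
  rcases aux_prime2 hud hm h2 h with h' | h'
  · rcases aux_prime2 hud hm hg h' with h'' | h''
    · exact Or.inl h''
    · exact Or.inr (Or.inl h'')
  · exact Or.inr (Or.inr h')

lemma aux_mem_interval_iff (hud : UpperDistributive X) {μ : X → X → X → X}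
    (hμ : IsMedianFn μ) (x y z : X) :
    z ∈ medInterval μ x y ↔ z ≤ x ⊔ y ∧ ∀ m : X, MeetIrred m → z ≤ m → x ≤ m ∨ y ≤ m := by
  constructor
  · intro h
    have h' : μ x y z = z := h
    constructor
    · rw [← h']; exact (hμ x y z).1 (by simp)
    · intro m hm hzm
      have hμm : μ x y z ≤ m := by rw [h']; exact hzm
      rcases aux_prime3 hud hμ hm hμm with h'' | h'' | h''
      · exact Or.inl ((le_sup_left.trans h''))
      · exact Or.inr (le_sup_left.trans h'')
      · exact Or.inl (le_sup_left.trans h'')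
  · rintro ⟨h1, h2⟩
    have hle : μ x y z ≤ z := by
      rw [aux_le_iff_mi]
      intro m hm hzm
      rcases h2 m hm hzm with hx | hy
      · exact ((hμ x y z).1 (show x ⊔ z ∈ _ by simp)).trans (sup_le hx hzm)
      · exact ((hμ x y z).1 (show y ⊔ z ∈ _ by simp)).trans (sup_le hy hzm)
    have hge : z ≤ μ x y z := (hμ x y z).2 (by
      intro w hw
      simp only [Set.mem_insert_iff, Set.mem_singleton_iff] at hw
      rcases hw with rfl | rfl | rfl
      · exact h1
      · exact le_sup_right
      · exact le_sup_right)
    exact le_antisymm hle hge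

lemma aux_left_mem (hud : UpperDistributive X) {μ : X → X → X → X} (hμ : IsMedianFn μ)
    (x y : X) : x ∈ medInterval μ x y :=
  (aux_mem_interval_iff hud hμ x y x).mpr ⟨le_sup_left, fun _ _ h => Or.inl h⟩

lemma aux_right_mem (hud : UpperDistributive X) {μ : X → X → X → X} (hμ : IsMedianFn μ)
    (x y : X) : y ∈ medInterval μ x y :=
  (aux_mem_interval_iff hud hμ x y y).mpr ⟨le_sup_right, fun _ _ h => Or.inr h⟩

lemma aux_interval_self (hud : UpperDistributive X) {μ : X → X → X → X} (hμ : IsMedianFn μ)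
    (x : X) : medInterval μ x x = {x} := by
  ext z
  simp only [Set.mem_singleton_iff]
  constructor
  · intro hz
    obtain ⟨h1, h2⟩ := (aux_mem_interval_iff hud hμ x x z).mp hz
    have hzx : z ≤ x := by simpa using h1
    have hxz : x ≤ z := (aux_le_iff_mi x z).mpr (fun m hm hzm => by
      rcases h2 m hm hzm with h | h <;> exact h)
    exact le_antisymm hzx hxz
  · rintro rfl; exact aux_left_mem hud hμ _ _

lemma aux_interval_trans (hud : UpperDistributive X) {μ : X → X → X → X} (hμ : IsMedianFn μ)
    {x y w z : X} (hw : w ∈ medInterval μ x y) (hz : z ∈ medInterval μ x w) :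
    z ∈ medInterval μ x y := by
  obtain ⟨hw1, hw2⟩ := (aux_mem_interval_iff hud hμ x y w).mp hw
  obtain ⟨hz1, hz2⟩ := (aux_mem_interval_iff hud hμ x w z).mp hz
  refine (aux_mem_interval_iff hud hμ x y z).mpr ⟨hz1.trans (sup_le le_sup_left hw1), ?_⟩
  intro m hm hzm
  rcases hz2 m hm hzm with h | h
  · exact Or.inl h
  · exact hw2 m hm h

end AuxMedian

section R3sec

variable {X : Type*}

open Classical in
/-- Three-level preorder with top `x`, middle class `I^μ(x,y)∖{x}`, bottom the rest. -/
noncomputable def lev3 (μ : X → X → X → X) (x y z : X) : ℕ :=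
  if z = x then 2 else if z ∈ medInterval μ x y then 1 else 0

noncomputable def R3 (μ : X → X → X → X) (x y : X) : Pref X where
  rel z w := lev3 μ x y w ≤ lev3 μ x y z
  refl _ := le_rfl
  trans _ _ _ h1 h2 := h2.trans h1

lemma R3_rel_iff (μ : X → X → X → X) (x y z w : X) :
    (R3 μ x y).rel z w ↔ lev3 μ x y w ≤ lev3 μ x y z := Iff.rfl

lemma lev3_self (μ : X → X → X → X) (x y : X) : lev3 μ x y x = 2 := if_pos rfl

lemma lev3_le_two (μ : X → X → X → X) (x y z : X) : lev3 μ x y z ≤ 2 := by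
  unfold lev3; split <;> [exact le_rfl; split <;> omega]

lemma lev3_eq_two_iff (μ : X → X → X → X) (x y z : X) : lev3 μ x y z = 2 ↔ z = x := by
  unfold lev3; split <;> [simp_all; split <;> simp_all]

lemma lev3_one_le_iff (μ : X → X → X → X) (x y z : X)
    (hx : x ∈ medInterval μ x y) :
    1 ≤ lev3 μ x y z ↔ z ∈ medInterval μ x y := by
  unfold lev3
  split
  · subst ‹z = x›; simp [hx]
  · split <;> simp_all

lemma R3_top (μ : X → X → X → X) (x y : X) : (R3 μ x y).IsTop x := by
  constructor
  · intro w
    show lev3 μ x y w ≤ lev3 μ x y x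
    rw [lev3_self]; exact lev3_le_two μ x y w
  · intro t' ht'
    have h2 : lev3 μ x y x ≤ lev3 μ x y t' := ht' x
    rw [lev3_self] at h2
    exact (lev3_eq_two_iff μ x y t').mp (le_antisymm (lev3_le_two μ x y t') h2)

end R3sec

section R3med

variable {X : Type*} [SemilatticeSup X] [Fintype X]

lemma R3_contour (hud : UpperDistributive X) {μ : X → X → X → X} (hμ : IsMedianFn μ)
    (x y : X) : {z | (R3 μ x y).rel z y} = medInterval μ x y := by
  have hxm : x ∈ medInterval μ x y := aux_left_mem hud hμ x y
  have hym : y ∈ medInterval μ x y := aux_right_mem hud hμ x y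
  ext z
  show lev3 μ x y y ≤ lev3 μ x y z ↔ _
  by_cases hyx : y = x
  · subst hyx
    rw [lev3_self]
    constructor
    · intro h
      have hz := (lev3_eq_two_iff μ y y z).mp (le_antisymm (lev3_le_two μ y y z) h)
      rw [aux_interval_self hud hμ y]; exact hz
    · intro h
      rw [aux_interval_self hud hμ y] at h
      exact le_of_eq ((lev3_eq_two_iff μ y y z).mpr h).symm
  · have hy1 : lev3 μ x y y = 1 := by unfold lev3; rw [if_neg hyx, if_pos hym]
    rw [hy1]
    exact lev3_one_le_iff μ x y z hxm

lemma R3_unimodal (hud : UpperDistributive X) {μ : X → X → X → X} (hμ : IsMedianFn μ)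
    (x y : X) : LocallyUnimodal μ (R3 μ x y) := by
  refine ⟨x, R3_top μ x y, ?_⟩
  intro w z hz hzx hstr
  obtain ⟨h1, h2⟩ := hstr
  rw [R3_rel_iff] at h1
  rw [R3_rel_iff] at h2
  by_cases hwx : w = x
  · subst hwx
    rw [aux_interval_self hud hμ w] at hz
    exact hzx hz
  · have hw1 : 1 ≤ lev3 μ x y w := by omega
    have hwI : w ∈ medInterval μ x y :=
      (lev3_one_le_iff μ x y w (aux_left_mem hud hμ x y)).mp hw1
    have hzI : z ∈ medInterval μ x y := aux_interval_trans hud hμ hwI hz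
    have hz1 : 1 ≤ lev3 μ x y z :=
      (lev3_one_le_iff μ x y z (aux_left_mem hud hμ x y)).mpr hzI
    have hw2 : lev3 μ x y w ≤ 1 := by
      unfold lev3; rw [if_neg hwx]; split <;> omega
    omega

end R3med

section StepSec

variable {X N : Type*} [SemilatticeSup X] [Fintype X] [Fintype N] [DecidableEq N]

lemma aux_step (hud : UpperDistributive X) {μ : X → X → X → X} (hμ : IsMedianFn μ)
    (f : (N → X) → X) (hB : BMuMonotonic μ f) {m : X} (hm : MeetIrred m)
    (x : N → X) (i : N) (b : X) (h1 : x i ≤ m → b ≤ m) (h2 : f x ≤ m) :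
    f (Function.update x i b) ≤ m := by
  obtain ⟨_, hmi⟩ := (aux_mem_interval_iff hud hμ (x i)
    (f (Function.update x i b)) (f x)).mp (hB x i b)
  rcases hmi m hm h2 with hxi | hf
  · have hb := h1 hxi
    have hx' := hB (Function.update x i b) i (x i)
    rw [Function.update_idem, Function.update_eq_self, Function.update_self] at hx'
    obtain ⟨hle', _⟩ := (aux_mem_interval_iff hud hμ _ _ _).mp hx'
    exact hle'.trans (sup_le hb h2)
  · exact hf

end StepSec

/-- **Theorem 1.** In a finite median join-semilattice, for an aggregation rule `f` the
following are equivalent: (i) strategy-proofness on every rich domain of locally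
unimodal preorders, (ii) `B_μ`-monotonicity, (iii) monotonic `M_X`-independence. -/
theorem strategyProof_iff_bMuMonotonic_iff_monotonicMIndependent
    {X N : Type*} [SemilatticeSup X] [Fintype X] [Fintype N] [DecidableEq N]
    (hud : UpperDistributive X) (hhelly : MeetHelly X)
    (μ : X → X → X → X) (hμ : IsMedianFn μ)
    (f : (N → X) → X) :
    ((∀ D : Set (Pref X), RichDomain μ D → StrategyProofOn f D) ↔ BMuMonotonic μ f) ∧
    (BMuMonotonic μ f ↔ MonotonicMIndependent f) :=  by
  classical
  have hBtoSP : BMuMonotonic μ f → ∀ D : Set (Pref X), RichDomain μ D → StrategyProofOn f D := by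
    intro hB D hD prefs hprefs tops htops i y hstrict
    obtain ⟨t, htt, huni⟩ := hD.1 (prefs i) (hprefs i)
    have hti : tops i = t := htt.2 (tops i) (htops i).1
    have hmem : f tops ∈ medInterval μ (tops i) (f (Function.update tops i y)) := hB tops i y
    rw [hti] at hmem
    by_cases hft : f tops = t
    · exact hstrict.2 (hft ▸ htt.1 _)
    · exact huni _ _ hmem hft hstrict
  have hSPtoB : (∀ D : Set (Pref X), RichDomain μ D → StrategyProofOn f D) → BMuMonotonic μ f := by
    intro hSP x i b
    set y' := f (Function.update x i b) with hy'
    have hrich : RichDomain μ {R : Pref X | ∃ a c, R = R3 μ a c} := by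
      constructor
      · rintro R ⟨a, c, rfl⟩
        exact R3_unimodal hud hμ a c
      · intro a c
        exact ⟨R3 μ a c, ⟨a, c, rfl⟩, R3_top μ a c, R3_contour hud hμ a c⟩
    have hsp := hSP _ hrich
    have hsp2 := hsp (fun j => R3 μ (x j) (if j = i then y' else x j))
      (fun j => ⟨x j, _, rfl⟩) x (fun j => R3_top μ (x j) _) i b
    simp only [if_pos rfl] at hsp2
    have hrel : (R3 μ (x i) y').rel (f x) y' := by
      by_contra hnr
      rw [R3_rel_iff] at hnr
      exact hsp2 ⟨le_of_not_ge hnr, hnr⟩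
    have hmem : f x ∈ {z | (R3 μ (x i) y').rel z y'} := hrel
    rw [R3_contour hud hμ (x i) y'] at hmem
    exact hmem
  have hBtoM : BMuMonotonic μ f → MonotonicMIndependent f := by
    intro hB x y m hm hsub hfx
    have key : ∀ l : List N, f (fun j => if j ∈ l then y j else x j) ≤ m := by
      intro l
      induction l with
      | nil =>
        have hh : (fun j => if j ∈ ([] : List N) then y j else x j) = x := by
          funext j; simp
        rw [hh]; exact hfx
      | cons i t IH =>
        have hupd : (fun j => if j ∈ i :: t then y j else x j)
            = Function.update (fun j => if j ∈ t then y j else x j) i (y i) := by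
          funext j
          by_cases hj : j = i
          · subst hj; simp [List.mem_cons]
          · simp [Function.update_of_ne hj, List.mem_cons, hj]
        rw [hupd]
        refine aux_step hud hμ f hB hm _ i (y i) ?_ IH
        intro hle
        by_cases hit : i ∈ t
        · simpa [hit] using hle
        · rw [if_neg hit] at hle
          exact hsub hle
    have hkey := key Finset.univ.toList
    have hall : ∀ j : N, j ∈ (Finset.univ : Finset N).toList :=
      fun j => Finset.mem_toList.mpr (Finset.mem_univ j)
    have hh : (fun j => if j ∈ (Finset.univ : Finset N).toList then y j else x j) = y := by
      funext j; rw [if_pos (hall j)]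
    rwa [hh] at hkey
  have hMtoB : MonotonicMIndependent f → BMuMonotonic μ f := by
    intro hM x i b
    refine (aux_mem_interval_iff hud hμ _ _ _).mpr ⟨?_, ?_⟩
    · rw [aux_le_iff_mi]
      intro m hm hsm
      rw [sup_le_iff] at hsm
      refine hM (Function.update x i b) x m hm ?_ hsm.2
      intro j hj
      by_cases hji : j = i
      · subst hji; exact hsm.1
      · have hjj : Function.update x i b j = x j := Function.update_of_ne hji _ _
        show x j ≤ m
        rw [← hjj]; exact hj
    · intro m hm hfm
      by_cases hxi : x i ≤ m
      · exact Or.inl hxi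
      · refine Or.inr (hM x (Function.update x i b) m hm ?_ hfm)
        intro j hj
        by_cases hji : j = i
        · exact absurd (by rw [← hji]; exact hj) hxi
        · show Function.update x i b j ≤ m
          rw [Function.update_of_ne hji]; exact hj
  exact ⟨⟨hSPtoB, hBtoSP⟩, ⟨hBtoM, hMtoB⟩⟩
end

section
/- Let (X,≤) be a finite median join-semilattice with median operation μ, and let f : X^N → X be an aggregation rule. If f is strategy-proof on U^N, where U is the set of all locally unimodal preorders on X with respect to the median betweenness (a rich domain), then f is B_μ-monotonic: for all i ∈ N, y_i ∈ X and x_N ∈ X^N, f(x_N) ∈ I^μ(x_i, f(y_i, x_{N∖{i}})). Equivalently (contrapositive): if there exist i, x_N and x_i' with f(x_N) ∉ I^μ(x_i, f(x_i', x_{N∖{i}})), then there is a locally unimodal preorder ≽* with top(≽*) = x_i, with exactly three indifference classes {x_i}, I^μ(x_i, f(x_i', x_{N∖{i}}))∖{x_i}, and X∖I^μ(x_i, f(x_i', x_{N∖{i}})), under which agent i strictly gains by reporting x_i' instead of x_i. -/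
section Aux

variable {X : Type*} [SemilatticeSup X] [Fintype X]

/-- In a finite join-semilattice, any set with a lower bound has a greatest lower bound. -/
lemma exists_glb_of_lb {S : Set X} {w : X} (hw : w ∈ lowerBounds S) : ∃ m, IsGLB S m := by
  classical
  let s : Finset X := Finset.univ.filter (fun a => a ∈ lowerBounds S)
  have hws : w ∈ s := by simp [s, hw]
  refine ⟨s.sup' ⟨w, hws⟩ id, ?_, ?_⟩
  · intro p hp
    apply Finset.sup'_le
    intro a ha
    have : a ∈ lowerBounds S := by simpa [s] using ha
    exact this hp
  · intro a ha
    exact Finset.le_sup' id (by simp [s, ha])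

variable {μ : X → X → X → X} (hμ : IsMedianFn μ)

include hμ

lemma mu_tt (t z : X) : μ t t z = t := by
  refine (hμ t t z).unique ⟨?_, ?_⟩
  · rintro p (rfl | rfl | rfl)
    · exact le_sup_left
    · exact le_sup_left
    · exact le_sup_left
  · intro a ha
    have := ha (Set.mem_insert _ _)
    simpa using this

lemma medInterval_self {t z : X} (hz : z ∈ medInterval μ t t) : z = t := by
  have h := mu_tt hμ t z
  have hz' : μ t t z = z := hz
  rw [hz'] at h
  exact h

lemma top_mem_medInterval (t b : X) : t ∈ medInterval μ t b := by
  show μ t b t = t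
  refine (hμ t b t).unique ⟨?_, ?_⟩
  · rintro p (rfl | rfl | rfl)
    · exact le_sup_left
    · exact le_sup_right
    · exact le_sup_left
  · intro a ha
    have := ha (by right; right; rfl)
    simpa using this

lemma base_mem_medInterval (t b : X) : b ∈ medInterval μ t b := by
  show μ t b b = b
  refine (hμ t b b).unique ⟨?_, ?_⟩
  · rintro p (rfl | rfl | rfl)
    · exact le_sup_right
    · exact le_sup_left
    · exact le_sup_right
  · intro a ha
    have := ha (by right; left; rfl)
    simpa using this

/-- Key geometric fact: intervals from the top are "convex": if `y ∈ I(t,b)` and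
`z ∈ I(t,y)` then `z ∈ I(t,b)`. -/
lemma medInterval_trans (hud : UpperDistributive X)
    {t b y z : X} (hy : y ∈ medInterval μ t b) (hz : z ∈ medInterval μ t y) :
    z ∈ medInterval μ t b := by
  have hyeq : μ t b y = y := hy
  have hzeq : μ t y z = z := hz
  have hy' : IsGLB {t ⊔ b, b ⊔ y, t ⊔ y} y := by have h := hμ t b y; rwa [hyeq] at h
  have hz' : IsGLB {t ⊔ y, y ⊔ z, t ⊔ z} z := by have h := hμ t y z; rwa [hzeq] at h
  have ylb : y ≤ t ⊔ b := hy'.1 (Set.mem_insert _ _)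
  have zlb : z ≤ t ⊔ y := hz'.1 (Set.mem_insert _ _)
  have hty_le : t ⊔ y ≤ t ⊔ b := sup_le le_sup_left ylb
  -- y is the glb of {t ⊔ y, b ⊔ y}
  have glbp : IsGLB {t ⊔ y, b ⊔ y} y := by
    constructor
    · rintro p (rfl | rfl)
      · exact le_sup_right
      · exact le_sup_right
    · intro w hw
      have hw1 : w ≤ t ⊔ y := hw (Set.mem_insert _ _)
      have hw2 : w ≤ b ⊔ y := hw (by right; rfl)
      refine hy'.2 ?_
      rintro p (rfl | rfl | rfl)
      · exact hw1.trans hty_le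
      · exact hw2
      · exact hw1
  -- z is the glb of {t ⊔ z, y ⊔ z}
  have glbz : IsGLB {t ⊔ z, y ⊔ z} z := by
    constructor
    · rintro p (rfl | rfl)
      · exact le_sup_right
      · exact le_sup_right
    · intro w hw
      have hw1 : w ≤ t ⊔ z := hw (Set.mem_insert _ _)
      have hw2 : w ≤ y ⊔ z := hw (by right; rfl)
      refine hz'.2 ?_
      rintro p (rfl | rfl | rfl)
      · exact hw1.trans (sup_le le_sup_left zlb)
      · exact hw2
      · exact hw1
  -- upper distributivity gives: y ⊔ z = glb {(y⊔z) ⊔ (t⊔y), (y⊔z) ⊔ (b⊔y)}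
  obtain ⟨m2, hm2⟩ : ∃ m, IsGLB {y ⊔ z ⊔ (t ⊔ y), y ⊔ z ⊔ (b ⊔ y)} m := by
    refine exists_glb_of_lb (w := y) ?_
    rintro p (rfl | rfl)
    · exact le_sup_left.trans le_sup_left
    · exact le_sup_left.trans le_sup_left
  have hstar : IsGLB {y ⊔ z ⊔ (t ⊔ y), y ⊔ z ⊔ (b ⊔ y)} (y ⊔ z) := by
    have := hud y (y ⊔ z) (t ⊔ y) (b ⊔ y) y m2 le_sup_left le_sup_right le_sup_right glbp hm2
    have h2 : y ⊔ z ⊔ y = y ⊔ z := sup_eq_left.mpr (le_sup_left)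
    rw [h2] at this
    rwa [← this] at hm2
  -- now show z = glb {t ⊔ b, b ⊔ z, t ⊔ z}
  show μ t b z = z
  refine (hμ t b z).unique ⟨?_, ?_⟩
  · rintro p (rfl | rfl | rfl)
    · exact zlb.trans hty_le
    · exact le_sup_right
    · exact le_sup_right
  · intro w hw
    have hw2 : w ≤ b ⊔ z := hw (by right; left; rfl)
    have hw3 : w ≤ t ⊔ z := hw (by right; right; rfl)
    have hwyz : w ≤ y ⊔ z := by
      refine hstar.2 ?_
      rintro p (rfl | rfl)
      · exact hw3.trans (sup_le (le_sup_left.trans le_sup_right) (le_sup_right.trans le_sup_left))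
      · exact hw2.trans (sup_le (le_sup_left.trans le_sup_right) (le_sup_right.trans le_sup_left))
    refine glbz.2 ?_
    rintro p (rfl | rfl)
    · exact hw3
    · exact hwyz

/-- The "dictatorial" locally unimodal preorder with top `t`. -/
lemma exists_dict_pref (t : X) :
    ∃ R : Pref X, R.IsTop t ∧ LocallyUnimodal μ R := by
  refine ⟨⟨fun y z => y = t ∨ z ≠ t, ?_, ?_⟩, ⟨?_, ?_⟩, ?_⟩
  · intro y
    by_cases h : y = t
    · exact Or.inl h
    · exact Or.inr h
  · rintro a b c (rfl | hb) hbc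
    · exact Or.inl rfl
    · rcases hbc with rfl | hc
      · exact absurd rfl hb
      · exact Or.inr hc
  · intro y; exact Or.inl rfl
  · rintro t' h
    rcases h t with rfl | h'
    · rfl
    · exact absurd rfl h'
  · refine ⟨t, ⟨fun y => Or.inl rfl, ?_⟩, ?_⟩
    · rintro t' h
      rcases h t with rfl | h'
      · rfl
      · exact absurd rfl h'
    · intro y z hz hzt hstrict
      rcases hstrict with ⟨h1, h2⟩
      have h2' : ¬ (z = t ∨ y ≠ t) := h2
      push_neg at h2'
      rcases h2' with ⟨h2a, h2b⟩
      subst h2b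
      exact hzt (medInterval_self hμ hz)

/-- The three-indifference-class locally unimodal preorder used in the proof. -/
lemma exists_threeClass_pref (hud : UpperDistributive X) (t b c : X)
    (hc : c ∉ medInterval μ t b) :
    ∃ R : Pref X, R.IsTop t ∧ LocallyUnimodal μ R ∧
      (∀ y z, R.rel y z ↔
        (y = t ∨ (y ∈ medInterval μ t b ∧ z ≠ t) ∨ z ∉ medInterval μ t b)) ∧
      R.strict b c := by
  have htI : t ∈ medInterval μ t b := top_mem_medInterval hμ t b
  have hbI : b ∈ medInterval μ t b := base_mem_medInterval hμ t b
  set I := medInterval μ t b with hIdef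
  refine ⟨⟨fun y z => y = t ∨ (y ∈ I ∧ z ≠ t) ∨ z ∉ I, ?_, ?_⟩,
    ⟨fun y => Or.inl rfl, ?_⟩, ?_, fun y z => Iff.rfl, ?_⟩
  · -- reflexivity
    intro y
    by_cases h1 : y = t
    · exact Or.inl h1
    · by_cases h2 : y ∈ I
      · exact Or.inr (Or.inl ⟨h2, h1⟩)
      · exact Or.inr (Or.inr h2)
  · -- transitivity
    rintro a u w (rfl | ⟨haI, hu⟩ | huI) h2
    · exact Or.inl rfl
    · rcases h2 with rfl | ⟨_, hw⟩ | hwI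
      · exact absurd rfl hu
      · exact Or.inr (Or.inl ⟨haI, hw⟩)
      · exact Or.inr (Or.inr hwI)
    · rcases h2 with rfl | ⟨huI', _⟩ | hwI
      · exact absurd htI huI
      · exact absurd huI' huI
      · exact Or.inr (Or.inr hwI)
  · -- uniqueness of top
    rintro t' h
    rcases h t with rfl | ⟨_, ht'⟩ | htI'
    · rfl
    · exact absurd rfl ht'
    · exact absurd htI htI'
  · -- local unimodality
    refine ⟨t, ⟨fun y => Or.inl rfl, ?_⟩, ?_⟩
    · rintro t' h
      rcases h t with rfl | ⟨_, ht'⟩ | htI'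
      · rfl
      · exact absurd rfl ht'
      · exact absurd htI htI'
    · intro y z hz hzt hstrict
      rcases hstrict with ⟨h1, h2⟩
      -- ¬ rel z y means z ≠ t, ¬(z ∈ I ∧ y ≠ t), y ∈ I
      have h2' : ¬ (z = t ∨ (z ∈ I ∧ y ≠ t) ∨ y ∉ I) := h2
      push_neg at h2'
      rcases h2' with ⟨hz_ne, h2b, hyI⟩
      by_cases hyt : y = t
      · subst hyt
        exact hzt (medInterval_self hμ hz)
      · have hzI : z ∉ I := fun hzI => hyt (h2b hzI)
        exact hzI (medInterval_trans hμ hud hyI hz)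
  · -- strict preference for b over c
    constructor
    · exact Or.inr (Or.inr hc)
    · rintro (rfl | ⟨hcI, _⟩ | hbI')
      · exact hc htI
      · exact hc hcI
      · exact hbI' hbI

end Aux

/-- If `f` is strategy-proof on the domain of all locally unimodal preorders (w.r.t. the
median betweenness), then `f` is `B_μ`-monotonic.  Equivalently (contrapositive): if
`B_μ`-monotonicity fails at `(x, i, x_i')`, there is a locally unimodal preorder with
top `x i` having exactly the three indifference classes `{x i}`,
`I^μ(x i, f(x_i', x_{-i})) \ {x i}` and the complement of that interval, under which
agent `i` strictly gains by reporting `x_i'` instead of `x i`. -/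
theorem bMuMonotonic_of_strategyProof
    {X N : Type*} [SemilatticeSup X] [Fintype X] [Fintype N] [DecidableEq N]
    (hud : UpperDistributive X) (hhelly : MeetHelly X)
    (μ : X → X → X → X) (hμ : IsMedianFn μ)
    (f : (N → X) → X) :
    (StrategyProofOn f {R : Pref X | LocallyUnimodal μ R} → BMuMonotonic μ f) ∧
    (∀ (x : N → X) (i : N) (xi' : X),
      f x ∉ medInterval μ (x i) (f (Function.update x i xi')) →
      ∃ R : Pref X, R.IsTop (x i) ∧ LocallyUnimodal μ R ∧
        (∀ y z, R.rel y z ↔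
          (y = x i ∨
            (y ∈ medInterval μ (x i) (f (Function.update x i xi')) ∧ z ≠ x i) ∨
            z ∉ medInterval μ (x i) (f (Function.update x i xi')))) ∧
        R.strict (f (Function.update x i xi')) (f x)) := by
  constructor
  · -- strategy-proofness implies B_μ-monotonicity
    intro hsp x i y
    by_contra hout
    obtain ⟨R, hRtop, hRlu, _, hRstrict⟩ :=
      exists_threeClass_pref hμ hud (x i) (f (Function.update x i y)) (f x) hout
    classical
    choose Rd hRdtop hRdlu using fun j : N => exists_dict_pref hμ (x j)
    let prefs : N → Pref X := Function.update Rd i R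
    have hmem : ∀ j, prefs j ∈ {R : Pref X | LocallyUnimodal μ R} := by
      intro j
      by_cases h : j = i
      · subst h; simpa [prefs] using hRlu
      · simpa [prefs, Function.update_of_ne h] using hRdlu j
    have htops : ∀ j, (prefs j).IsTop (x j) := by
      intro j
      by_cases h : j = i
      · subst h; simpa [prefs] using hRtop
      · simpa [prefs, Function.update_of_ne h] using hRdtop j
    have := hsp prefs hmem x htops i y
    have hpi : prefs i = R := Function.update_self i R Rd
    rw [hpi] at this
    exact this hRstrict
  · -- the explicit three-class preorder
    intro x i xi' hout
    exact exists_threeClass_pref hμ hud (x i) (f (Function.update x i xi')) (f x) hout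
end

section
/- Let (X,≤) be a finite median join-semilattice with median operation μ, and let f : X^N → X be an aggregation rule. If f is B_μ-monotonic, i.e. for all i ∈ N, y_i ∈ X and x_N ∈ X^N one has f(x_N) ∈ I^μ(x_i, f(y_i, x_{N∖{i}})), then f is strategy-proof on U^N, where U is the set of all locally unimodal preorders on X with respect to the median-induced betweenness. -/
/-- If `f` is `B_μ`-monotonic then `f` is strategy-proof on the domain of all locally
unimodal preorders w.r.t. the median-induced betweenness. -/
theorem strategyProof_of_bMuMonotonic
    {X N : Type*} [SemilatticeSup X] [Fintype X] [Fintype N] [DecidableEq N]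
    (hud : UpperDistributive X) (hhelly : MeetHelly X)
    (μ : X → X → X → X) (hμ : IsMedianFn μ)
    (f : (N → X) → X) (hmono : BMuMonotonic μ f) :
    StrategyProofOn f {R : Pref X | LocallyUnimodal μ R} := by
  intro prefs hprefs tops htops i y
  obtain ⟨t, htt, hu⟩ := hprefs i
  have ht : t = tops i := ((htops i).2 t htt.1)
  subst ht
  have hmem := hmono tops i y
  by_cases hz : f tops = tops i
  · rintro ⟨_, hnot⟩
    rw [hz] at hnot; exact hnot (htt.1 _)
  · exact hu _ _ hmem hz
end

section
/- Let (X,≤) be a finite median join-semilattice with median operation μ, and let f : X^N → X be an aggregation rule. If f is B_μ-monotonic, i.e. for all i ∈ N, y_i ∈ X and x_N ∈ X^N one has f(x_N) ∈ I^μ(x_i, f(y_i, x_{N∖{i}})), then f is monotonically M_X-independent: for all profiles x_N, y_N ∈ X^N and every meet-irreducible element m of X, if {i ∈ N : x_i ≤ m} ⊆ {i ∈ N : y_i ≤ m} and f(x_N) ≤ m, then f(y_N) ≤ m. -/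
/-- In a finite join-semilattice, any set with a lower bound has a GLB. -/
lemma exists_isGLB_of_lowerBound {X : Type*} [SemilatticeSup X] [Fintype X]
    {S : Set X} {b : X} (hb : b ∈ lowerBounds S) : ∃ g, IsGLB S g := by
  classical
  have hfin : (lowerBounds S).Finite := Set.toFinite _
  have hne : (hfin.toFinset).Nonempty := ⟨b, hfin.mem_toFinset.mpr hb⟩
  refine ⟨hfin.toFinset.sup' hne id, ?_, ?_⟩
  · intro s hs
    exact Finset.sup'_le _ _ (fun t ht => (hfin.mem_toFinset.mp ht) hs)
  · intro z hz
    exact Finset.le_sup' id (hfin.mem_toFinset.mpr hz)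

lemma isGLB_triple_of_pair {X : Type*} [SemilatticeSup X] {a b c p g : X}
    (hp : IsGLB ({b, c} : Set X) p) (hg : IsGLB ({a, p} : Set X) g) :
    IsGLB ({a, b, c} : Set X) g := by
  constructor
  · rintro s (rfl | rfl | rfl)
    · exact hg.1 (Set.mem_insert _ _)
    · exact le_trans (hg.1 (Set.mem_insert_of_mem _ rfl)) (hp.1 (Set.mem_insert _ _))
    · exact le_trans (hg.1 (Set.mem_insert_of_mem _ rfl)) (hp.1 (Set.mem_insert_of_mem _ rfl))
  · intro z hz
    refine hg.2 ?_
    rintro s (rfl | rfl)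
    · exact hz (Set.mem_insert _ _)
    · exact hp.2 fun t ht => hz (Set.mem_insert_of_mem _ ht)

/-- One-step lemma: changing agent `i`'s report preserves `f · ≤ m` under the
relevant condition. -/
lemma step_le_of_bMuMonotonic
    {X N : Type*} [SemilatticeSup X] [Fintype X] [DecidableEq N]
    (hud : UpperDistributive X)
    {μ : X → X → X → X} (hμ : IsMedianFn μ)
    {f : (N → X) → X} (hmono : BMuMonotonic μ f)
    {m : X} (hm : MeetIrred m)
    (x : N → X) (i : N) (w : X)
    (hcond : x i ≤ m → w ≤ m) (hfx : f x ≤ m) :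
    f (Function.update x i w) ≤ m := by
  classical
  set x' := Function.update x i w with hx'
  by_cases hxi : x i ≤ m
  · -- both `x i ≤ m` and `w ≤ m`: go from `x'` back to `x`.
    have hw := hcond hxi
    have h1 := hmono x' i (x i)
    have hx'' : Function.update x' i (x i) = x := by
      rw [hx', Function.update_idem, Function.update_eq_self]
    rw [hx''] at h1
    have hx'i : x' i = w := Function.update_self i w x
    have hglb : IsGLB ({w ⊔ f x, f x ⊔ f x', w ⊔ f x'} : Set X) (f x') := by
      have := hμ w (f x) (f x')
      have heq : μ w (f x) (f x') = f x' := by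
        have := h1; simp only [medInterval, Set.mem_setOf_eq, hx'i] at this
        exact this
      rwa [heq] at this
    have : f x' ≤ w ⊔ f x := hglb.1 (Set.mem_insert _ _)
    exact this.trans (sup_le hw hfx)
  · -- `x i ≰ m`: use meet-irreducibility of `m`.
    set a := x i ⊔ f x' with ha'
    set b := f x' ⊔ f x with hb'
    set c := x i ⊔ f x with hc'
    have hglb : IsGLB ({a, b, c} : Set X) (f x) := by
      have h1 := hmono x i w
      simp only [medInterval, Set.mem_setOf_eq] at h1
      have := hμ (x i) (f x') (f x)
      rwa [h1] at this
    have hga : f x ≤ a := hglb.1 (Set.mem_insert _ _)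
    have hgb : f x ≤ b := hglb.1 (Set.mem_insert_of_mem _ (Set.mem_insert _ _))
    have hgc : f x ≤ c := hglb.1 (Set.mem_insert_of_mem _ (Set.mem_insert_of_mem _ rfl))
    -- p := glb {b, c}
    obtain ⟨p, hp⟩ := exists_isGLB_of_lowerBound (S := {b, c}) (b := f x)
      (by rintro s (rfl | rfl); exacts [hgb, hgc])
    -- q := glb {m ⊔ b, m ⊔ c}
    obtain ⟨q, hq⟩ := exists_isGLB_of_lowerBound (S := {m ⊔ b, m ⊔ c}) (b := m)
      (by rintro s (rfl | rfl); exacts [le_sup_left, le_sup_left])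
    have hmq : m ⊔ p = q := hud (f x) m b c p q hfx hgb hgc hp hq
    have hgp : f x ≤ p := hp.2 (by rintro s (rfl | rfl); exacts [hgb, hgc])
    -- glb {a, p} = f x
    have hgap : IsGLB ({a, p} : Set X) (f x) := by
      constructor
      · rintro s (rfl | rfl); exacts [hga, hgp]
      · intro z hz
        refine hglb.2 ?_
        rintro s (rfl | rfl | rfl)
        · exact hz (Set.mem_insert _ _)
        · exact le_trans (hz (Set.mem_insert_of_mem _ rfl)) (hp.1 (Set.mem_insert _ _))
        · exact le_trans (hz (Set.mem_insert_of_mem _ rfl))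
            (hp.1 (Set.mem_insert_of_mem _ rfl))
    -- r := glb {m ⊔ a, m ⊔ p}
    obtain ⟨r, hr⟩ := exists_isGLB_of_lowerBound (S := {m ⊔ a, m ⊔ p}) (b := m)
      (by rintro s (rfl | rfl); exacts [le_sup_left, le_sup_left])
    have hmr : m ⊔ f x = r := hud (f x) m a p (f x) r hfx hga hgp hgap hr
    have hmfx : m ⊔ f x = m := sup_eq_left.mpr hfx
    have hrm : r = m := by rw [← hmr, hmfx]
    have hglbm : IsGLB ({m ⊔ a, m ⊔ b, m ⊔ c} : Set X) m := by
      rw [hrm, hmq] at hr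
      exact isGLB_triple_of_pair hq hr
    have hmem := hm _ hglbm
    rcases hmem with hma | hmb | hmc
    · have : a ≤ m := le_sup_right.trans hma.symm.le
      exact le_sup_right.trans this
    · have : b ≤ m := le_sup_right.trans hmb.symm.le
      exact le_sup_left.trans this
    · have : c ≤ m := le_sup_right.trans hmc.symm.le
      exact absurd (le_sup_left.trans this) hxi

/-- If `f` is `B_μ`-monotonic then `f` is monotonically `M_X`-independent. -/
theorem monotonicMIndependent_of_bMuMonotonic
    {X N : Type*} [SemilatticeSup X] [Fintype X] [Fintype N] [DecidableEq N]
    (hud : UpperDistributive X) (hhelly : MeetHelly X)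
    (μ : X → X → X → X) (hμ : IsMedianFn μ)
    (f : (N → X) → X) (hmono : BMuMonotonic μ f) :
    MonotonicMIndependent f := by
  classical
  intro x y m hm hsub hfx
  have key : ∀ S : Finset N, f (fun j => if j ∈ S then y j else x j) ≤ m := by
    intro S
    induction S using Finset.induction_on with
    | empty =>
      have : (fun j => if j ∈ (∅ : Finset N) then y j else x j) = x := by
        funext j; simp
      rwa [this]
    | @insert i S hiS ih =>
      have heq : (fun j => if j ∈ insert i S then y j else x j)
          = Function.update (fun j => if j ∈ S then y j else x j) i (y i) := by
        funext j
        by_cases hji : j = i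
        · subst hji; simp
        · simp [Function.update_of_ne hji, Finset.mem_insert, hji]
      rw [heq]
      refine step_le_of_bMuMonotonic hud hμ hmono hm _ i (y i) ?_ ih
      intro hxi
      have : x i ≤ m := by simpa [hiS] using hxi
      exact hsub this
  have := key Finset.univ
  simpa using this
end

section
/- Let (X,≤) be a finite median join-semilattice with median operation μ, and let f : X^N → X be an aggregation rule. If f is monotonically M_X-independent — for all profiles x_N, y_N ∈ X^N and every meet-irreducible element m of X, {i : x_i ≤ m} ⊆ {i : y_i ≤ m} and f(x_N) ≤ m imply f(y_N) ≤ m — then f is B_μ-monotonic: for all i ∈ N, y_i ∈ X and x_N ∈ X^N one has f(x_N) = μ(x_i, f(x_N), f(y_i, x_{N∖{i}})), i.e. f(x_N) ∈ I^μ(x_i, f(y_i, x_{N∖{i}})). -/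
/-- In a finite partial order, every element is the greatest lower bound of the
meet-irreducible elements above it. -/
lemma glb_meetIrred_above {X : Type*} [PartialOrder X] [Finite X] (w : X) :
    IsGLB {m | MeetIrred m ∧ w ≤ m} w := by
  haveI : WellFoundedGT X := Finite.to_wellFoundedGT
  refine wellFounded_gt.induction
    (C := fun w => IsGLB {m | MeetIrred m ∧ w ≤ m} w) w ?_
  intro w ih
  constructor
  · intro m hm; exact hm.2
  · intro z hz
    by_cases hw : MeetIrred w
    · exact hz ⟨hw, le_rfl⟩
    · rw [MeetIrred] at hw
      push_neg at hw
      obtain ⟨Y, hY, hwY⟩ := hw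
      refine hY.2 fun y hy => ?_
      have hwy : w < y := lt_of_le_of_ne (hY.1 hy) (by rintro rfl; exact hwY hy)
      exact (ih y hwy).2 fun m hm => hz ⟨hm.1, le_trans hwy.le hm.2⟩

/-- If `f` is monotonically `M_X`-independent then `f` is `B_μ`-monotonic:
`f(x_N) = μ(x_i, f(x_N), f(y_i, x_{N∖{i}}))`, i.e. `f(x_N) ∈ I^μ(x_i, f(y_i, x_{-i}))`. -/
theorem bMuMonotonic_of_monotonicMIndependent
    {X N : Type*} [SemilatticeSup X] [Fintype X] [Fintype N] [DecidableEq N]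
    (hud : UpperDistributive X) (hhelly : MeetHelly X)
    (μ : X → X → X → X) (hμ : IsMedianFn μ)
    (f : (N → X) → X) (hind : MonotonicMIndependent f) :
    ∀ (x : N → X) (i : N) (y : X),
      f x = μ (x i) (f x) (f (Function.update x i y)) ∧
      f x ∈ medInterval μ (x i) (f (Function.update x i y)) := by
  intro x i y
  set a := x i with ha_def
  set b := f x with hb_def
  set c := f (Function.update x i y) with hc_def
  -- direction 1: if a ≤ m and c ≤ m, then b ≤ m
  have dir1 : ∀ m : X, MeetIrred m → a ≤ m → c ≤ m → b ≤ m := by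
    intro m hm ham hcm
    refine hind (Function.update x i y) x m hm ?_ hcm
    intro j hj
    by_cases hji : j = i
    · subst hji; exact ham
    · simp only [Set.mem_setOf_eq, Function.update_of_ne hji] at hj ⊢
      exact hj
  -- direction 2: if b ≤ m and ¬ a ≤ m, then c ≤ m
  have dir2 : ∀ m : X, MeetIrred m → b ≤ m → ¬ a ≤ m → c ≤ m := by
    intro m hm hbm ham
    refine hind x (Function.update x i y) m hm ?_ hbm
    intro j hj
    by_cases hji : j = i
    · subst hji; exact absurd hj ham
    · simp only [Set.mem_setOf_eq, Function.update_of_ne hji]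
      exact hj
  have hbac : b ≤ a ⊔ c :=
    (glb_meetIrred_above (a ⊔ c)).2 fun m hm =>
      dir1 m hm.1 (le_trans le_sup_left hm.2) (le_trans le_sup_right hm.2)
  have hblb : b ∈ lowerBounds ({a ⊔ b, b ⊔ c, a ⊔ c} : Set X) := by
    rintro z hz
    simp only [Set.mem_insert_iff, Set.mem_singleton_iff] at hz
    rcases hz with rfl | rfl | rfl
    · exact le_sup_right
    · exact le_sup_left
    · exact hbac
  have hμabc := hμ a b c
  have h1 : b ≤ μ a b c := hμabc.2 hblb
  have h2 : μ a b c ≤ b := by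
    refine (glb_meetIrred_above b).2 fun m hm => ?_
    by_cases ham : a ≤ m
    · exact le_trans (hμabc.1 (Set.mem_insert _ _)) (sup_le ham hm.2)
    · exact le_trans
        (hμabc.1 (Set.mem_insert_iff.2 (Or.inr (Set.mem_insert _ _))))
        (sup_le hm.2 (dir2 m hm.1 hm.2 ham))
  have heq : μ a b c = b := le_antisymm h2 h1
  have hsets : ({a ⊔ c, c ⊔ b, a ⊔ b} : Set X) = {a ⊔ b, b ⊔ c, a ⊔ c} := by
    rw [sup_comm c b]
    ext z
    simp only [Set.mem_insert_iff, Set.mem_singleton_iff]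
    tauto
  have hμacb : IsGLB ({a ⊔ b, b ⊔ c, a ⊔ c} : Set X) (μ a c b) := hsets ▸ hμ a c b
  have heq2 : μ a c b = b := (hμacb.unique hμabc).trans heq
  exact ⟨heq.symm, heq2⟩
end

section
/- Let (X,≤) be a finite join-semilattice satisfying upper distributivity (for every u ∈ X the principal order filter ↑u is a distributive lattice), let m be a meet-irreducible element of X, and let Y ⊆ X be such that the meet ⋀Y exists. If ⋀Y < m, then there exists y ∈ Y with y ≤ m. -/
/-! Since `g ≤ m`, finite distributivity in the lattice `↑g` gives
`m = m ⊔ ⋀ Y = ⋀ {m ⊔ y | y ∈ Y}`, and meet-irreducibility of `m` then yields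
`m = m ⊔ y`, i.e. `y ≤ m`, for some `y ∈ Y`. -/

section GLB

variable {X : Type*}

lemma exists_isGLB_of_mem_lowerBounds [SemilatticeSup X] [Finite X] {S : Set X} {c : X}
    (hc : c ∈ lowerBounds S) : ∃ b, IsGLB S b := by
  have hne : (lowerBounds S).toFinite.toFinset.Nonempty := ⟨c, by simpa using hc⟩
  exact ⟨_, isLUB_lowerBounds.1 (by simpa using Finset.isLUB_sup' hne)⟩

lemma IsGLB.isGLB_insert_iff [Preorder X] {T : Set X} {t a b : X} (ht : IsGLB T t) :
    IsGLB (insert a T) b ↔ IsGLB {a, t} b := by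
  have : lowerBounds (insert a T) = lowerBounds {a, t} := by
    rw [lowerBounds_insert, lowerBounds_insert, lowerBounds_singleton, ht.lowerBounds_eq]
  rw [IsGLB, IsGLB, this]

end GLB

namespace UpperDistributive

variable {X : Type*} [SemilatticeSup X] [Finite X]

lemma isGLB_pair_sup (hud : UpperDistributive X) {u x y z a : X}
    (hx : u ≤ x) (hy : u ≤ y) (hz : u ≤ z) (ha : IsGLB {y, z} a) :
    IsGLB {x ⊔ y, x ⊔ z} (x ⊔ a) := by
  obtain ⟨b, hb⟩ := exists_isGLB_of_mem_lowerBounds (S := {x ⊔ y, x ⊔ z}) (c := x) (by simp)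
  rwa [hud u x y z a b hx hy hz ha hb]

lemma isGLB_image_sup (hud : UpperDistributive X) {u x : X} (hx : u ≤ x) (S : Set X) :
    ∀ {a}, (∀ y ∈ S, u ≤ y) → IsGLB S a → IsGLB ((x ⊔ ·) '' S) (x ⊔ a) := by
  induction S, S.toFinite using Set.Finite.induction_on with
  | empty =>
    intro a _ ha
    rw [Set.image_empty, isGLB_empty_iff] at *
    exact fun b => (ha b).trans le_sup_right
  | @insert z s _ _ ih =>
    intro a hu ha
    have hus : ∀ y ∈ s, u ≤ y := fun y hy => hu y (Set.mem_insert_of_mem z hy)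
    obtain ⟨b, hb⟩ := exists_isGLB_of_mem_lowerBounds hus
    rw [Set.image_insert_eq, (ih hus hb).isGLB_insert_iff]
    exact hud.isGLB_pair_sup hx (hu z (Set.mem_insert z s)) (hb.2 hus) (hb.isGLB_insert_iff.1 ha)

end UpperDistributive

/-- In a finite upper distributive join-semilattice, if `m` is meet-irreducible and a
subset `Y` has a meet `g` with `g < m`, then some `y ∈ Y` satisfies `y ≤ m`. -/
theorem exists_le_of_meetIrred_of_glb_lt
    {X : Type*} [SemilatticeSup X] [Fintype X] (hud : UpperDistributive X)
    (m : X) (hm : MeetIrred m) (Y : Set X) (g : X) (hg : IsGLB Y g) (hlt : g < m) :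
    ∃ y ∈ Y, y ≤ m := by
  have hglb := hud.isGLB_image_sup hlt.le Y (fun y hy => hg.1 hy) hg
  rw [sup_eq_left.2 hlt.le] at hglb
  obtain ⟨y, hy, hym⟩ := hm _ hglb
  exact ⟨y, hy, sup_eq_left.1 hym⟩
end

section
/- Let A be a nonempty finite set and let R_A^T be the set of all total preorders (reflexive, transitive, total binary relations) on A, ordered by set inclusion, with the join of two total preorders defined as the transitive closure of their union. Then (R_A^T, ∨) is a finite median join-semilattice: it is a join-semilattice, it is upper distributive, and it satisfies the meet-Helly (co-coronation) property. -/
/-- The set of total preorders (reflexive, transitive, total relations) on `A`. -/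
def TotalPreorderOn (A : Type*) : Type _ :=
  {R : A → A → Prop // Reflexive R ∧ Transitive R ∧ Total R}

namespace TotalPreorderOn

variable {A : Type*}

/-- Total preorders are ordered by set inclusion of relations. -/
instance : PartialOrder (TotalPreorderOn A) where
  le R S := ∀ a b, R.1 a b → S.1 a b
  le_refl R := fun _ _ h => h
  le_trans R S T h₁ h₂ := fun a b h => h₂ a b (h₁ a b h)
  le_antisymm R S h₁ h₂ :=
    Subtype.ext (funext fun a => funext fun b => propext ⟨h₁ a b, h₂ a b⟩)

/-- The join of two total preorders: the transitive closure of their union. -/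
def join (R S : TotalPreorderOn A) : TotalPreorderOn A :=
  ⟨Relation.ReflTransGen (fun a b => R.1 a b ∨ S.1 a b),
    fun _ => Relation.ReflTransGen.refl,
    fun _ _ _ h₁ h₂ => Relation.ReflTransGen.trans h₁ h₂,
    fun a b => (R.2.2.2 a b).imp
      (fun h => Relation.ReflTransGen.single (Or.inl h))
      (fun h => Relation.ReflTransGen.single (Or.inl h))⟩

theorem le_def {R S : TotalPreorderOn A} : R ≤ S ↔ ∀ a b, R.1 a b → S.1 a b :=
  Iff.rfl

/-- `(R_A^T, ∨)` is a join-semilattice, with join the transitive closure of union. -/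
instance : SemilatticeSup (TotalPreorderOn A) where
  sup := join
  le_sup_left R S := fun _ _ h => Relation.ReflTransGen.single (Or.inl h)
  le_sup_right R S := fun _ _ h => Relation.ReflTransGen.single (Or.inr h)
  sup_le R S T h₁ h₂ := by
    intro a b h
    induction h with
    | refl => exact T.2.1 a
    | @tail b c _ hstep ih => exact T.2.2.1 ih (hstep.elim (h₁ _ _) (h₂ _ _))

/-- The universal relation is the top total preorder. -/
instance : OrderTop (TotalPreorderOn A) where
  top := ⟨fun _ _ => True, fun _ => trivial, fun _ _ _ _ _ => trivial,
    fun _ _ => Or.inl trivial⟩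
  le_top _ := fun _ _ _ => trivial

instance [Finite A] : Finite (TotalPreorderOn A) := by
  unfold TotalPreorderOn; infer_instance

theorem sup_def (R S : TotalPreorderOn A) :
    R ⊔ S = join R S := rfl

end TotalPreorderOn


section MedianAux

variable {A : Type*}

private lemma localContra {y z : A → A → Prop}
    (ty : Transitive y) (tz : Transitive z)
    {c c' d d' : A} (hycd : y c d) (hzcd' : z c' d')
    (tcc : (y c c' ∧ z c c') ∨ (y c' c ∧ z c' c))
    (tdd : (y d d' ∧ z d d') ∨ (y d' d ∧ z d' d))
    (n1 : ¬(y c d ∧ z c d)) (n2 : ¬(y c d' ∧ z c d'))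
    (n3 : ¬(y c' d ∧ z c' d)) (n4 : ¬(y c' d' ∧ z c' d')) : False := by
  rcases tcc with ⟨_, zcc'⟩ | ⟨yc'c, _⟩
  · have zcd' : z c d' := tz zcc' hzcd'
    rcases tdd with ⟨ydd', _⟩ | ⟨_, zd'd⟩
    · exact n2 ⟨ty hycd ydd', zcd'⟩
    · exact n1 ⟨hycd, tz zcd' zd'd⟩
  · have yc'd : y c' d := ty yc'c hycd
    rcases tdd with ⟨ydd', _⟩ | ⟨_, zd'd⟩
    · exact n4 ⟨ty yc'd ydd', hzcd'⟩
    · exact n3 ⟨yc'd, tz hzcd' zd'd⟩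

private lemma chain_cross {r : A → A → Prop} {P : A → Prop} {a b : A}
    (h : Relation.ReflTransGen r a b) (ha : ¬ P a) :
    P b → ∃ c d, r c d ∧ ¬ P c ∧ P d := by
  induction h with
  | refl => exact fun hb => absurd hb ha
  | @tail m b' hm hstep ih =>
    intro hb
    by_cases hPm : P m
    · exact ih hPm
    · exact ⟨m, b', hstep, hPm, hb⟩

private lemma key (x y z : TotalPreorderOn A)
    (hyz : ∀ a b, (y.1 a b ∧ z.1 a b) ∨ (y.1 b a ∧ z.1 b a))
    {a b : A}
    (hxy : Relation.ReflTransGen (fun p q => x.1 p q ∨ y.1 p q) a b)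
    (hxz : Relation.ReflTransGen (fun p q => x.1 p q ∨ z.1 p q) a b) :
    Relation.ReflTransGen (fun p q => x.1 p q ∨ (y.1 p q ∧ z.1 p q)) a b := by
  by_contra hT
  set T : A → A → Prop :=
    fun p q => Relation.ReflTransGen (fun p q => x.1 p q ∨ (y.1 p q ∧ z.1 p q)) p q with hTdef
  -- cut: elements w with ¬ T a w
  have hstep : ∀ {p q}, T a p → (x.1 p q ∨ (y.1 p q ∧ z.1 p q)) → T a q :=
    fun hp hpq => Relation.ReflTransGen.tail hp hpq
  obtain ⟨c, d, hcd, hc, hd⟩ :=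
    chain_cross (P := fun w => ¬ T a w) hxy (not_not_intro Relation.ReflTransGen.refl) hT
  obtain ⟨c', d', hcd', hc', hd'⟩ :=
    chain_cross (P := fun w => ¬ T a w) hxz (not_not_intro Relation.ReflTransGen.refl) hT
  have hTac : T a c := not_not.mp hc
  have hTac' : T a c' := not_not.mp hc'
  have hycd : y.1 c d := by
    rcases hcd with hx | hy
    · exact absurd (hstep hTac (Or.inl hx)) hd
    · exact hy
  have hzcd' : z.1 c' d' := by
    rcases hcd' with hx | hz
    · exact absurd (hstep hTac' (Or.inl hx)) hd'
    · exact hz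
  have cross : ∀ {p q}, T a p → ¬ T a q → ¬(y.1 p q ∧ z.1 p q) :=
    fun hp hq hpq => hq (hstep hp (Or.inr hpq))
  exact localContra y.2.2.1 z.2.2.1 hycd hzcd' (hyz c c') (hyz d d')
    (cross hTac hd) (cross hTac hd') (cross hTac' hd) (cross hTac' hd')

end MedianAux

/-- **Example 1.** The set of total preorders on a nonempty finite set `A`, ordered by
inclusion and with join given by the transitive closure of the union, is a finite
median join-semilattice: the transitive closure of the union is the least upper bound,
and upper distributivity and meet-Helly (co-coronation) hold. -/
theorem totalPreorders_median_joinSemilattice (A : Type*) [Fintype A] [Nonempty A] :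
    Finite (TotalPreorderOn A) ∧
    (∀ R S : TotalPreorderOn A, IsLUB {R, S} (TotalPreorderOn.join R S)) ∧
    UpperDistributive (TotalPreorderOn A) ∧
    MeetHelly (TotalPreorderOn A) := by
  refine ⟨inferInstance, ?_, ?_, ?_⟩
  · intro R S
    rw [← TotalPreorderOn.sup_def]
    exact isLUB_pair
  · -- Upper distributivity
    intro u x y z m₁ m₂ _ _ _ hm₁ hm₂
    have hmy : m₁ ≤ y := hm₁.1 (by simp)
    have hmz : m₁ ≤ z := hm₁.1 (by simp)
    have hyz : ∀ a b, (y.1 a b ∧ z.1 a b) ∨ (y.1 b a ∧ z.1 b a) := fun a b =>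
      (m₁.2.2.2 a b).imp (fun h => ⟨hmy a b h, hmz a b h⟩) (fun h => ⟨hmy b a h, hmz b a h⟩)
    have hP : ∃ P : TotalPreorderOn A, P.1 = fun p q => y.1 p q ∧ z.1 p q :=
      ⟨⟨fun p q => y.1 p q ∧ z.1 p q,
        fun p => ⟨y.2.1 p, z.2.1 p⟩,
        fun p q r h1 h2 => ⟨y.2.2.1 h1.1 h2.1, z.2.2.1 h1.2 h2.2⟩,
        fun p q => hyz p q⟩, rfl⟩
    obtain ⟨P, hPrel⟩ := hP
    have hm₁P : m₁ = P := by
      apply le_antisymm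
      · intro a b h
        rw [hPrel]
        exact ⟨hmy a b h, hmz a b h⟩
      · refine hm₁.2 ?_
        intro w hw
        simp only [Set.mem_insert_iff, Set.mem_singleton_iff] at hw
        rcases hw with rfl | rfl
        · intro a b h; rw [hPrel] at h; exact h.1
        · intro a b h; rw [hPrel] at h; exact h.2
    apply le_antisymm
    · refine hm₂.2 ?_
      intro w hw
      simp only [Set.mem_insert_iff, Set.mem_singleton_iff] at hw
      rcases hw with rfl | rfl
      · exact sup_le_sup_left hmy x
      · exact sup_le_sup_left hmz x
    · have h1 : m₂ ≤ x ⊔ y := hm₂.1 (by simp)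
      have h2 : m₂ ≤ x ⊔ z := hm₂.1 (by simp)
      intro a b hab
      have hk := key x y z hyz (h1 a b hab) (h2 a b hab)
      rw [hm₁P]
      show Relation.ReflTransGen (fun p q => x.1 p q ∨ P.1 p q) a b
      rw [hPrel]
      exact hk
  · -- Meet-Helly
    rintro x y z ⟨a, ha⟩ ⟨b, hb⟩ ⟨c, hc⟩
    have pairTot : ∀ (R S m : TotalPreorderOn A), IsGLB {R, S} m →
        ∀ p q, (R.1 p q ∧ S.1 p q) ∨ (R.1 q p ∧ S.1 q p) := by
      intro R S m hm p q
      have h1 : m ≤ R := hm.1 (by simp)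
      have h2 : m ≤ S := hm.1 (by simp)
      exact (m.2.2.2 p q).imp (fun h => ⟨h1 p q h, h2 p q h⟩) (fun h => ⟨h1 q p h, h2 q p h⟩)
    have txy := pairTot x y a ha
    have tyz := pairTot y z b hb
    have txz := pairTot x z c hc
    have tri : ∀ p q, (x.1 p q ∧ y.1 p q ∧ z.1 p q) ∨ (x.1 q p ∧ y.1 q p ∧ z.1 q p) := by
      intro p q
      rcases txy p q with ⟨h1, h2⟩ | ⟨h1, h2⟩ <;>
        rcases tyz p q with ⟨h3, h4⟩ | ⟨h3, h4⟩ <;>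
        rcases txz p q with ⟨h5, h6⟩ | ⟨h5, h6⟩ <;> tauto
    refine ⟨⟨fun p q => x.1 p q ∧ y.1 p q ∧ z.1 p q,
      fun p => ⟨x.2.1 p, y.2.1 p, z.2.1 p⟩,
      fun p q r h1 h2 => ⟨x.2.2.1 h1.1 h2.1, y.2.2.1 h1.2.1 h2.2.1, z.2.2.1 h1.2.2 h2.2.2⟩,
      fun p q => tri p q⟩, ?_, ?_⟩
    · intro w hw
      simp only [Set.mem_insert_iff, Set.mem_singleton_iff] at hw
      rcases hw with rfl | rfl | rfl
      · exact fun p q h => h.1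
      · exact fun p q h => h.2.1
      · exact fun p q h => h.2.2
    · intro w hw
      have w1 : w ≤ x := hw (by simp)
      have w2 : w ≤ y := hw (by simp)
      have w3 : w ≤ z := hw (by simp)
      exact fun p q h => ⟨w1 p q h, w2 p q h, w3 p q h⟩
end

section
/- Let A be a nonempty finite set and (R_A^T, ∨) the join-semilattice of total preorders on A, where the join is the transitive closure of the union and the order is set inclusion. Then the meet-irreducible elements of (R_A^T, ∨) are exactly the total preorders R_{A1A2} with precisely two indifference classes, i.e. those determined by a two-block ordered partition (A1,A2) of A (A1 ∪ A2 = A, A1 ∩ A2 = ∅, both nonempty) via: x R_{A1A2} y and not y R_{A1A2} x iff x ∈ A1 and y ∈ A2. Moreover these meet-irreducibles coincide with the co-atoms of (R_A^T, ∨), so this join-semilattice is co-atomistic. -/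
/-- A total preorder with exactly two indifference classes: it is determined by a
two-block ordered partition `(A₁, A₂)` of `A`, with `x` strictly above `y` iff
`x ∈ A₁` and `y ∈ A₂`. -/
def TwoClassPreorder {A : Type*} (m : TotalPreorderOn A) : Prop :=
  ∃ A₁ A₂ : Set A, A₁.Nonempty ∧ A₂.Nonempty ∧ A₁ ∪ A₂ = Set.univ ∧ A₁ ∩ A₂ = ∅ ∧
    ∀ x y, (m.1 x y ∧ ¬ m.1 y x) ↔ (x ∈ A₁ ∧ y ∈ A₂)

namespace TotalPreorderOn

variable {A : Type*}

/-- The two-class preorder separating `{z | z >ₘ x}` from the rest. -/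
def sep (m : TotalPreorderOn A) (x : A) : TotalPreorderOn A :=
  ⟨fun a b => (m.1 a x ∧ ¬ m.1 x a) ∨ ¬ (m.1 b x ∧ ¬ m.1 x b),
   fun a => by tauto,
   fun a b c hab hbc => by tauto,
   fun a b => by tauto⟩

theorem le_sep (m : TotalPreorderOn A) (x : A) : m ≤ m.sep x := by
  intro a b hab
  by_cases hb : m.1 b x ∧ ¬ m.1 x b
  · exact Or.inl ⟨m.2.2.1 hab hb.1, fun h => hb.2 (m.2.2.1 h hab)⟩
  · exact Or.inr hb

theorem not_sep_rel {m : TotalPreorderOn A} {u v : A} (h : ¬ m.1 u v) :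
    ¬ (m.sep u).1 u v := by
  have hvu : m.1 v u := (m.2.2.2 u v).resolve_left h
  rintro (⟨_, hr⟩ | hr)
  · exact hr (m.2.1 u)
  · exact hr ⟨hvu, h⟩

theorem sep_twoClass {m : TotalPreorderOn A} {u v : A} (h : ¬ m.1 u v) :
    TwoClassPreorder (m.sep u) := by
  have hvu : m.1 v u := (m.2.2.2 u v).resolve_left h
  refine ⟨{z | m.1 z u ∧ ¬ m.1 u z}, {z | ¬ (m.1 z u ∧ ¬ m.1 u z)},
    ⟨v, hvu, h⟩, ⟨u, fun hc => hc.2 (m.2.1 u)⟩, ?_, ?_, ?_⟩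
  · ext z; simp [Set.mem_union]; tauto
  · ext z; simp only [Set.mem_inter_iff, Set.mem_setOf_eq, Set.mem_empty_iff_false, iff_false]
    tauto
  · intro a b
    constructor
    · rintro ⟨hab, hnba⟩
      simp only [sep] at hab hnba
      tauto
    · rintro ⟨ha, hb⟩
      exact ⟨Or.inl ha, by simp only [sep]; tauto⟩

/-- Every total preorder is the GLB of the two-class preorders above it. -/
theorem isGLB_twoClass (m : TotalPreorderOn A) :
    IsGLB {S : TotalPreorderOn A | TwoClassPreorder S ∧ m ≤ S} m := by
  constructor
  · intro S hS
    exact hS.2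
  · intro L hL a b hab
    by_contra h
    exact not_sep_rel h (hL ⟨sep_twoClass h, m.le_sep a⟩ a b hab)

theorem twoClass_isCoatom {m : TotalPreorderOn A} (h : TwoClassPreorder m) :
    IsCoatom m := by
  obtain ⟨A₁, A₂, ⟨a₁, ha₁⟩, ⟨a₂, ha₂⟩, huniv, hdisj, hiff⟩ := h
  have hmem : ∀ z : A, z ∈ A₁ ∨ z ∈ A₂ := fun z => by
    have : z ∈ A₁ ∪ A₂ := huniv ▸ Set.mem_univ z
    exact this
  have hnot : ∀ z : A, z ∈ A₁ → z ∈ A₂ → False := fun z h1 h2 => by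
    have : z ∈ A₁ ∩ A₂ := ⟨h1, h2⟩
    simp [hdisj] at this
  -- any pair not of the form (A₂, A₁) is related by m
  have hrel : ∀ x y : A, ¬ (x ∈ A₂ ∧ y ∈ A₁) → m.1 x y := by
    intro x y hxy
    by_contra hm
    have hyx : m.1 y x := (m.2.2.2 x y).resolve_left hm
    have := (hiff y x).1 ⟨hyx, hm⟩
    exact hxy ⟨this.2, this.1⟩
  constructor
  · intro he
    have := (hiff a₁ a₂).2 ⟨ha₁, ha₂⟩
    rw [he] at this
    exact this.2 trivial
  · intro S hS
    obtain ⟨hle, hne⟩ := lt_iff_le_and_ne.1 hS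
    -- there is a pair related by S but not by m
    have : ∃ u v, S.1 u v ∧ ¬ m.1 u v := by
      by_contra hc
      push_neg at hc
      exact hne (le_antisymm hle (fun a b hab => hc a b hab))
    obtain ⟨u, v, hSuv, hmuv⟩ := this
    have hvu : m.1 v u := (m.2.2.2 u v).resolve_left hmuv
    have huv2 := (hiff v u).1 ⟨hvu, hmuv⟩
    have hv1 : v ∈ A₁ := huv2.1
    have hu2 : u ∈ A₂ := huv2.2
    rw [eq_top_iff]
    intro a b _
    by_cases hab : a ∈ A₂ ∧ b ∈ A₁
    · -- go through u and v
      have h1 : m.1 a u := hrel a u (fun hc => hnot u hc.2 hu2)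
      have h2 : m.1 v b := hrel v b (fun hc => hnot v hv1 hc.1)
      exact S.2.2.1 (S.2.2.1 (hle a u h1) hSuv) (hle v b h2)
    · exact hle a b (hrel a b hab)

end TotalPreorderOn

/-- In the join-semilattice of total preorders on a nonempty finite set, the
meet-irreducible elements are exactly the total preorders with two indifference
classes, and they coincide with the co-atoms (so the semilattice is co-atomistic). -/
theorem totalPreorders_meetIrred_iff_twoClass_iff_coatom
    (A : Type*) [Fintype A] [Nonempty A] :
    ∀ m : TotalPreorderOn A,
      (MeetIrred m ↔ TwoClassPreorder m) ∧ (MeetIrred m ↔ IsCoatom m) := by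
  intro m
  have h1 : MeetIrred m → TwoClassPreorder m := fun h =>
    (h _ (TotalPreorderOn.isGLB_twoClass m)).1
  have h2 : TwoClassPreorder m → IsCoatom m := TotalPreorderOn.twoClass_isCoatom
  have h3 : IsCoatom m → MeetIrred m := by
    intro hc Y hY
    by_contra hmem
    have htop : (⊤ : TotalPreorderOn A) ∈ lowerBounds Y := by
      intro y hy
      have hlt : m < y := lt_of_le_of_ne (hY.1 hy) (fun e => hmem (e ▸ hy))
      exact (hc.2 y hlt).ge
    exact hc.1 (le_antisymm le_top (hY.2 htop))
  exact ⟨⟨h1, fun h => h3 (h2 h)⟩, ⟨fun h => h2 (h1 h), h3⟩⟩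
end

section
/- Let A be a nonempty finite set, (R_A^T, ∨) the median join-semilattice of total preorders on A (join = transitive closure of union, order = inclusion) with median μ and meet-irreducibles M (the two-indifference-class total preorders), and let f : (R_A^T)^N → R_A^T be an aggregation rule (social welfare function). Then the following are equivalent: (i) f is strategy-proof on D^N for every rich domain D of locally unimodal preorders with respect to the median betweenness on R_A^T; (ii) for each m ∈ M there exists an order filter F_m of (P(N),⊆) such that for all profiles R_N of total preorders, f(R_N) = ⋂{ m ∈ M : {i ∈ N : R_i ⊆ m} ∈ F_m }. -/
/-!
A total preorder on a finite set is the intersection of the two-class total preorders above it,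
and the two-class total preorders are exactly the meet-irreducibles. Since the meet of total
preorders, when it exists, is their intersection, a meet-irreducible `m` above such a meet lies
above one of the factors: take `u` least in the top class of `m` and `l` greatest outside it;
the factor failing `l ≽ u` has a cut separating `u` from `l`, and that cut can only be the one
of `m`. Hence `z` lies between `x` and `y` iff every meet-irreducible above `x` and `y` is above
`z` and every one above `z` is above `x` or `y`.

With this description, `B_μ`-monotonicity of `f` is the same as monotonic independence on
meet-irreducibles, which is the same as the filter representation, `F m` being the coalitions
able to push `f` below `m`. `B_μ`-monotonicity gives strategy-proofness on every locally
unimodal domain, and conversely a violation of it is a profitable manipulation for an agent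
with the three-tier preference `x i ≻ I^μ(x i, o) ≻ rest`, which belongs to a rich domain.
-/

section MedianSemilattice

variable {X : Type*} [SemilatticeSup X] {μ : X → X → X → X}

theorem le_sup_of_mem_medInterval (hμ : IsMedianFn μ) {x y z : X}
    (h : z ∈ medInterval μ x y) : z ≤ x ⊔ y :=
  h ▸ (hμ x y z).1 (Set.mem_insert _ _)

theorem left_mem_medInterval (hμ : IsMedianFn μ) (x y : X) : x ∈ medInterval μ x y :=
  (hμ x y x).unique (IsLeast.isGLB ⟨by simp, by simp [lowerBounds]⟩)

theorem right_mem_medInterval (hμ : IsMedianFn μ) (x y : X) : y ∈ medInterval μ x y :=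
  (hμ x y y).unique (IsLeast.isGLB ⟨by simp, by simp [lowerBounds]⟩)

theorem eq_of_mem_medInterval_self (hμ : IsMedianFn μ) {x z : X}
    (h : z ∈ medInterval μ x x) : z = x :=
  h.symm.trans <| (hμ x x z).unique (IsLeast.isGLB ⟨by simp, by simp [lowerBounds]⟩)

end MedianSemilattice

section SocialChoice

variable {X N : Type*}

theorem MonotonicMIndependent.le_iff_mem_winningCoalitions [Preorder X]
    {f : (N → X) → X} (hf : MonotonicMIndependent f) {m : X} (hm : MeetIrred m) (x : N → X) :
    f x ≤ m ↔ {i | x i ≤ m} ∈ winningCoalitions f m :=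
  ⟨fun h => ⟨x, rfl, h⟩, fun ⟨y, hy, hfy⟩ => hf y x m hm hy.subset hfy⟩

theorem MonotonicMIndependent.orderFilterN_winningCoalitions [Preorder X]
    {f : (N → X) → X} (hf : MonotonicMIndependent f) {m : X} (hm : MeetIrred m) :
    OrderFilterN (winningCoalitions f m) := by
  classical
  rintro _ T ⟨x, rfl, hfx⟩ hT
  let y : N → X := fun i => if i ∈ T then m else x i
  have hy : {i | y i ≤ m} = T := by
    ext i
    by_cases hi : i ∈ T
    · simp [y, hi]
    · simpa [y, hi] using mt (@hT i) hi
  exact ⟨y, hy, hf x y m hm (hy ▸ hT) hfx⟩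

theorem strategyProofOn_of_bMuMonotonic [DecidableEq N] {μ : X → X → X → X} {f : (N → X) → X}
    (hf : BMuMonotonic μ f) {D : Set (Pref X)} (hD : ∀ R ∈ D, LocallyUnimodal μ R) :
    StrategyProofOn f D := by
  intro prefs hprefs tops htops i y hgain
  obtain ⟨t, ht, hunimodal⟩ := hD _ (hprefs i)
  obtain rfl : tops i = t := ht.2 _ (htops i).1
  by_cases hfi : f tops = tops i
  · exact hgain.2 (hfi ▸ ht.1 _)
  · exact hunimodal _ _ (hf tops i y) hfi hgain

def Pref.ofRank (r : X → ℕ) : Pref X :=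
  ⟨fun s t => r t ≤ r s, fun _ => le_rfl, fun _ _ _ h₁ h₂ => h₂.trans h₁⟩

open Classical in
noncomputable def tierRank (μ : X → X → X → X) (v w t : X) : ℕ :=
  if t = v then 2 else if t ∈ medInterval μ v w then 1 else 0

noncomputable def tierPref (μ : X → X → X → X) (v w : X) : Pref X :=
  Pref.ofRank (tierRank μ v w)

theorem tierRank_le_two (μ : X → X → X → X) (v w t : X) : tierRank μ v w t ≤ 2 := by
  unfold tierRank
  split_ifs <;> omega

theorem two_le_tierRank_iff {μ : X → X → X → X} {v w t : X} : 2 ≤ tierRank μ v w t ↔ t = v := by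
  unfold tierRank
  split_ifs with h <;> simp [h]

theorem isTop_tierPref (μ : X → X → X → X) (v w : X) : (tierPref μ v w).IsTop v :=
  ⟨fun t => (tierRank_le_two μ v w t).trans (two_le_tierRank_iff.2 rfl),
    fun _ ht => two_le_tierRank_iff.1 ((two_le_tierRank_iff.2 rfl).trans (ht v))⟩

variable [SemilatticeSup X] {μ : X → X → X → X}

theorem one_le_tierRank_iff (hμ : IsMedianFn μ) {v w t : X} :
    1 ≤ tierRank μ v w t ↔ t ∈ medInterval μ v w := by
  unfold tierRank
  split_ifs with hv hI
  · simpa [hv] using left_mem_medInterval hμ v w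
  · simpa using hI
  · simpa using hI

theorem setOf_tierPref_rel (hμ : IsMedianFn μ) (v w : X) :
    {z | (tierPref μ v w).rel z w} = medInterval μ v w := by
  ext z
  show tierRank μ v w w ≤ tierRank μ v w z ↔ z ∈ medInterval μ v w
  by_cases hw : w = v
  · subst hw
    rw [show tierRank μ w w w = 2 from if_pos rfl, two_le_tierRank_iff]
    exact ⟨fun h => h ▸ left_mem_medInterval hμ w w, eq_of_mem_medInterval_self hμ⟩
  · have hw1 : tierRank μ v w w = 1 := by
      rw [tierRank, if_neg hw, if_pos (right_mem_medInterval hμ v w)]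
    rw [hw1, one_le_tierRank_iff hμ]

theorem bMuMonotonic_of_strategyProofOn [DecidableEq N] (hμ : IsMedianFn μ) {f : (N → X) → X}
    (hf : StrategyProofOn f (Set.range fun p : X × X => tierPref μ p.1 p.2)) :
    BMuMonotonic μ f := by
  intro x i y
  by_contra hx
  set o := f (Function.update x i y)
  refine hf (fun j => tierPref μ (x j) o) (fun j => ⟨(x j, o), rfl⟩) x
    (fun j => isTop_tierPref μ (x j) o) i y ?_
  have ho := (one_le_tierRank_iff hμ).2 (right_mem_medInterval hμ (x i) o)
  have hfx := (one_le_tierRank_iff hμ).not.2 hx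
  exact ⟨by show tierRank μ (x i) o (f x) ≤ tierRank μ (x i) o o; omega,
    by show ¬ tierRank μ (x i) o o ≤ tierRank μ (x i) o (f x); omega⟩

end SocialChoice

namespace TotalPreorderOn

variable {A : Type*}

/-- The two indifference classes `U ≻ Uᶜ`; this is `⊤` when `U` is `∅` or `univ`. -/
def twoClass (U : Set A) : TotalPreorderOn A :=
  ⟨fun a b => b ∈ U → a ∈ U, fun _ => id, fun _ _ _ hab hbc hc => hab (hbc hc),
    fun a _ => (em (a ∈ U)).imp (fun ha _ => ha) fun ha hb => absurd hb ha⟩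

theorem exists_le_twoClass_of_not_rel {R : TotalPreorderOn A} {a b : A} (h : ¬ R.1 a b) :
    ∃ U, R ≤ twoClass U ∧ b ∈ U ∧ a ∉ U :=
  ⟨{c | ¬ R.1 a c}, fun _ _ hcd hd hac => hd (R.2.2.1 hac hcd), h, fun ha => ha (R.2.1 a)⟩

theorem exists_greatest_of_finite [Finite A] (R : TotalPreorderOn A) {s : Set A}
    (hs : s.Nonempty) : ∃ u ∈ s, ∀ w ∈ s, R.1 u w := by
  obtain ⟨u, hu, hmax⟩ := s.toFinite.exists_maximalFor (fun w => {v | R.1 w v}) s hs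
  exact ⟨u, hu, fun w hw => (R.2.2.2 u w).elim id fun hwu =>
    hmax hw (fun v huv => R.2.2.1 hwu huv) (R.2.1 w)⟩

theorem exists_least_of_finite [Finite A] (R : TotalPreorderOn A) {s : Set A}
    (hs : s.Nonempty) : ∃ u ∈ s, ∀ w ∈ s, R.1 w u := by
  obtain ⟨u, hu, hmin⟩ := s.toFinite.exists_minimalFor (fun w => {v | R.1 w v}) s hs
  exact ⟨u, hu, fun w hw => (R.2.2.2 w u).elim id fun huw =>
    hmin hw (fun v hwv => R.2.2.1 huw hwv) (R.2.1 u)⟩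

theorem isGLB_iff_rel_iff {S : Set (TotalPreorderOn A)} {R : TotalPreorderOn A} :
    IsGLB S R ↔ ∀ a b, R.1 a b ↔ ∀ J ∈ S, J.1 a b := by
  constructor
  · intro hR a b
    refine ⟨fun hab J hJ => hR.1 hJ a b hab, fun hab => ?_⟩
    -- the intersection is total because it contains the total preorder `R`
    let T : TotalPreorderOn A :=
      ⟨fun a b => ∀ J ∈ S, J.1 a b, fun a J _ => J.2.1 a,
        fun _ _ _ h₁ h₂ J hJ => J.2.2.1 (h₁ J hJ) (h₂ J hJ),
        fun a b => (R.2.2.2 a b).imp (fun h J hJ => hR.1 hJ a b h) fun h J hJ => hR.1 hJ b a h⟩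
    have hT : T ∈ lowerBounds S := fun J hJ _ _ h => h J hJ
    exact hR.2 hT a b hab
  · intro hR
    exact ⟨fun J hJ a b hab => (hR a b).1 hab J hJ,
      fun W hW a b hab => (hR a b).2 fun J hJ => hW hJ a b hab⟩

theorem meetIrred_twoClass {U : Set A} (hU : U.Nonempty) (hUc : Uᶜ.Nonempty) :
    MeetIrred (twoClass U) := by
  obtain ⟨u, hu⟩ := hU
  obtain ⟨l, hl⟩ := hUc
  intro Y hY
  obtain ⟨R, hR, hRlu⟩ : ∃ R ∈ Y, ¬ R.1 l u := by
    by_contra! h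
    exact hl ((isGLB_iff_rel_iff.1 hY l u).2 h hu)
  -- a total preorder strictly above `twoClass U` is `⊤`, which would give `l ≽ u`
  suffices hRU : R ≤ twoClass U from le_antisymm hRU (hY.1 hR) ▸ hR
  intro c d hcd hd
  by_contra hc
  exact hRlu <| R.2.2.1 (R.2.2.1 (hY.1 hR l c fun h => absurd h hc) hcd) (hY.1 hR d u fun _ => hd)

theorem exists_eq_twoClass_of_meetIrred {m : TotalPreorderOn A} (hm : MeetIrred m) :
    ∃ U : Set A, U.Nonempty ∧ Uᶜ.Nonempty ∧ m = twoClass U := by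
  let cuts := {U : Set A | m ≤ twoClass U ∧ U.Nonempty ∧ Uᶜ.Nonempty}
  have hglb : IsGLB (twoClass '' cuts) m := by
    refine isGLB_iff_rel_iff.2 fun a b => ⟨fun hab _ ⟨U, hU, hJ⟩ => hJ ▸ hU.1 a b hab, ?_⟩
    intro h
    by_contra hab
    obtain ⟨U, hmU, hb, ha⟩ := exists_le_twoClass_of_not_rel hab
    exact ha (h _ ⟨U, ⟨hmU, ⟨b, hb⟩, ⟨a, ha⟩⟩, rfl⟩ hb)
  obtain ⟨U, ⟨-, hU, hUc⟩, hUm⟩ := hm _ hglb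
  exact ⟨U, hU, hUc, hUm.symm⟩

theorem eq_of_le_of_meetIrred {m m' : TotalPreorderOn A} (hm' : MeetIrred m') (hm : MeetIrred m)
    (h : m' ≤ m) : m' = m := by
  obtain ⟨V, -, -, rfl⟩ := exists_eq_twoClass_of_meetIrred hm'
  obtain ⟨U, ⟨u, hu⟩, ⟨l, hl⟩, rfl⟩ := exists_eq_twoClass_of_meetIrred hm
  congr 1
  ext w
  exact ⟨fun hw => h w u (fun _ => hw) hu,
    fun hw => by_contra fun hwV => hl (h l w (fun h' => absurd h' hwV) hw)⟩

theorem rel_iff_forall_meetIrred {R : TotalPreorderOn A} {a b : A} :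
    R.1 a b ↔ ∀ m, MeetIrred m → R ≤ m → m.1 a b := by
  refine ⟨fun hab m _ hRm => hRm a b hab, fun h => by_contra fun hab => ?_⟩
  obtain ⟨U, hRU, hb, ha⟩ := exists_le_twoClass_of_not_rel hab
  exact ha (h _ (meetIrred_twoClass ⟨b, hb⟩ ⟨a, ha⟩) hRU hb)

theorem le_iff_forall_meetIrred {R S : TotalPreorderOn A} :
    R ≤ S ↔ ∀ m, MeetIrred m → S ≤ m → R ≤ m :=
  ⟨fun hRS _ _ hSm => hRS.trans hSm, fun h a b hab =>
    rel_iff_forall_meetIrred.2 fun m hm hSm => h m hm hSm a b hab⟩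

theorem exists_mem_le_of_isGLB [Finite A] {S : Set (TotalPreorderOn A)} {R m : TotalPreorderOn A}
    (hS : IsGLB S R) (hm : MeetIrred m) (hRm : R ≤ m) : ∃ J ∈ S, J ≤ m := by
  obtain ⟨U, hU, hUc, rfl⟩ := exists_eq_twoClass_of_meetIrred hm
  obtain ⟨u, hu, hu_least⟩ := R.exists_least_of_finite hU
  obtain ⟨l, hl, hl_greatest⟩ := R.exists_greatest_of_finite hUc
  obtain ⟨J, hJ, hJlu⟩ : ∃ J ∈ S, ¬ J.1 l u := by
    by_contra! h
    exact hl (hRm l u ((isGLB_iff_rel_iff.1 hS l u).2 h) hu)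
  obtain ⟨V, hJV, huV, hlV⟩ := exists_le_twoClass_of_not_rel hJlu
  have hRV : R ≤ twoClass V := (hS.1 hJ).trans hJV
  have hVU : V = U := Set.ext fun w =>
    ⟨fun hw => by_contra fun hwU => hlV (hRV l w (hl_greatest w hwU) hw),
      fun hw => hRV w u (hu_least w hw) huV⟩
  exact ⟨J, hJ, hVU ▸ hJV⟩

section MedianBetweenness

variable [Finite A]
  {μ : TotalPreorderOn A → TotalPreorderOn A → TotalPreorderOn A → TotalPreorderOn A}

theorem mem_medInterval_iff (hμ : IsMedianFn μ) {x y z : TotalPreorderOn A} :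
    z ∈ medInterval μ x y ↔
      ∀ m, MeetIrred m → (x ≤ m → y ≤ m → z ≤ m) ∧ (z ≤ m → x ≤ m ∨ y ≤ m) := by
  constructor
  · intro h m hm
    refine ⟨fun hx hy => (le_sup_of_mem_medInterval hμ h).trans (sup_le hx hy), fun hz => ?_⟩
    have hglb := hμ x y z
    rw [show μ x y z = z from h] at hglb
    obtain ⟨J, hJ, hJm⟩ := exists_mem_le_of_isGLB hglb hm hz
    rcases hJ with rfl | rfl | rfl
    · exact Or.inl (le_sup_left.trans hJm)
    · exact Or.inr (le_sup_left.trans hJm)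
    · exact Or.inl (le_sup_left.trans hJm)
  · intro h
    refine (hμ x y z).unique ⟨?_, fun w hw => le_iff_forall_meetIrred.2 fun m hm hzm => ?_⟩
    · rintro J (rfl | rfl | rfl)
      · exact le_iff_forall_meetIrred.2 fun m hm hJm =>
          (h m hm).1 (le_sup_left.trans hJm) (le_sup_right.trans hJm)
      · exact le_sup_right
      · exact le_sup_right
    · rcases (h m hm).2 hzm with hxm | hym
      · exact (hw (by simp)).trans (sup_le hxm hzm)
      · exact (hw (by simp)).trans (sup_le hym hzm)

theorem medInterval_subset_of_mem (hμ : IsMedianFn μ) {v w y : TotalPreorderOn A}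
    (hy : y ∈ medInterval μ v w) : medInterval μ v y ⊆ medInterval μ v w := by
  intro z hz
  rw [mem_medInterval_iff hμ] at hy hz ⊢
  exact fun m hm => ⟨fun hv hw => (hz m hm).1 hv ((hy m hm).1 hv hw),
    fun hzm => ((hz m hm).2 hzm).elim Or.inl (hy m hm).2⟩

theorem locallyUnimodal_tierPref (hμ : IsMedianFn μ) (v w : TotalPreorderOn A) :
    LocallyUnimodal μ (tierPref μ v w) := by
  refine ⟨v, isTop_tierPref μ v w, fun y z hz hzv hyz => ?_⟩
  have hlt : tierRank μ v w z < tierRank μ v w y := lt_of_not_ge hyz.2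
  have hy2 : ¬ 2 ≤ tierRank μ v w y := fun h =>
    hzv (eq_of_mem_medInterval_self hμ (two_le_tierRank_iff.1 h ▸ hz))
  by_cases hy : y ∈ medInterval μ v w
  · have hz1 := (one_le_tierRank_iff hμ).2 (medInterval_subset_of_mem hμ hy hz)
    omega
  · have hy1 := (one_le_tierRank_iff hμ).not.2 hy
    omega

theorem richDomain_range_tierPref (hμ : IsMedianFn μ) :
    RichDomain μ (Set.range fun p : TotalPreorderOn A × TotalPreorderOn A => tierPref μ p.1 p.2) :=
  ⟨by rintro _ ⟨⟨v, w⟩, rfl⟩; exact locallyUnimodal_tierPref hμ v w,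
    fun v w => ⟨_, ⟨(v, w), rfl⟩, isTop_tierPref μ v w, setOf_tierPref_rel hμ v w⟩⟩

variable {N : Type*} {f : (N → TotalPreorderOn A) → TotalPreorderOn A}

theorem le_update_of_bMuMonotonic [DecidableEq N] (hμ : IsMedianFn μ) (hf : BMuMonotonic μ f)
    {m : TotalPreorderOn A} (hm : MeetIrred m) {x : N → TotalPreorderOn A} (hfx : f x ≤ m)
    {i : N} {z : TotalPreorderOn A} (hz : x i ≤ m → z ≤ m) : f (Function.update x i z) ≤ m := by
  by_cases hxi : x i ≤ m
  · -- agent `i` moving back from `z` to `x i`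
    have h := hf (Function.update x i z) i (x i)
    rw [Function.update_idem, Function.update_eq_self, Function.update_self] at h
    exact (le_sup_of_mem_medInterval hμ h).trans (sup_le (hz hxi) hfx)
  · exact (((mem_medInterval_iff hμ).1 (hf x i z) m hm).2 hfx).resolve_left hxi

theorem monotonicMIndependent_of_bMuMonotonic [Fintype N] [DecidableEq N] (hμ : IsMedianFn μ)
    (hf : BMuMonotonic μ f) : MonotonicMIndependent f := by
  intro x y m hm hxy hfx
  suffices h : ∀ s : Finset N, f (s.piecewise y x) ≤ m by simpa using h Finset.univ
  intro s
  induction s using Finset.induction_on with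
  | empty => simpa using hfx
  | insert i s hi ih =>
    rw [Finset.piecewise_insert]
    refine le_update_of_bMuMonotonic hμ hf hm ih fun h => hxy ?_
    rwa [Finset.piecewise_eq_of_notMem _ _ _ hi] at h

theorem bMuMonotonic_of_monotonicMIndependent [DecidableEq N] (hμ : IsMedianFn μ)
    (hf : MonotonicMIndependent f) : BMuMonotonic μ f := by
  intro x i y
  refine (mem_medInterval_iff hμ).2 fun m hm => ⟨fun hxi => hf _ _ m hm fun j hj => ?_,
    fun hfx => or_iff_not_imp_left.2 fun hxi => hf _ _ m hm (fun j hj => ?_) hfx⟩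
  · by_cases hji : j = i
    · exact hji ▸ hxi
    · simpa [Function.update_of_ne hji] using hj
  · by_cases hji : j = i
    · exact absurd (hji ▸ hj) hxi
    · simpa [Function.update_of_ne hji] using hj

theorem monotonicMIndependent_of_filterRepresentation {F : TotalPreorderOn A → Set (Set N)}
    (hF : ∀ m, MeetIrred m → OrderFilterN (F m))
    (hrep : ∀ (R : N → TotalPreorderOn A) (a b : A),
      (f R).1 a b ↔ ∀ m : TotalPreorderOn A, MeetIrred m → {i | R i ≤ m} ∈ F m → m.1 a b) :
    MonotonicMIndependent f := by
  have hglb (R : N → TotalPreorderOn A) :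
      IsGLB {m | MeetIrred m ∧ {i | R i ≤ m} ∈ F m} (f R) :=
    isGLB_iff_rel_iff.2 fun a b => (hrep R a b).trans <| by simp only [Set.mem_ofPred_eq, and_imp]
  intro x y m hm hxy hfx
  obtain ⟨m', ⟨hm', hx⟩, hm'm⟩ := exists_mem_le_of_isGLB (hglb x) hm hfx
  obtain rfl := eq_of_le_of_meetIrred hm' hm hm'm
  exact (hglb y).1 ⟨hm', hF m' hm' _ _ hx hxy⟩

end MedianBetweenness

end TotalPreorderOn

open TotalPreorderOn

theorem swf_strategyProof_iff_filterRepresentation_general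
    (A : Type*) [Fintype A] {N : Type*} [Fintype N] [DecidableEq N]
    (μ : TotalPreorderOn A → TotalPreorderOn A → TotalPreorderOn A → TotalPreorderOn A)
    (hμ : IsMedianFn μ)
    (f : (N → TotalPreorderOn A) → TotalPreorderOn A) :
    (∀ D : Set (Pref (TotalPreorderOn A)), RichDomain μ D → StrategyProofOn f D) ↔
      ∃ F : TotalPreorderOn A → Set (Set N),
        (∀ m, MeetIrred m → OrderFilterN (F m)) ∧
        ∀ (R : N → TotalPreorderOn A) (a b : A),
          (f R).1 a b ↔
            ∀ m : TotalPreorderOn A, MeetIrred m → {i | R i ≤ m} ∈ F m → m.1 a b := by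
  constructor
  · intro hSP
    have hf : MonotonicMIndependent f := monotonicMIndependent_of_bMuMonotonic hμ
      (bMuMonotonic_of_strategyProofOn hμ (hSP _ (richDomain_range_tierPref hμ)))
    refine ⟨winningCoalitions f, fun m hm => hf.orderFilterN_winningCoalitions hm, ?_⟩
    intro R a b
    rw [rel_iff_forall_meetIrred]
    exact forall₂_congr fun m hm => imp_congr_left (hf.le_iff_mem_winningCoalitions hm R)
  · rintro ⟨F, hF, hrep⟩ D hD
    exact strategyProofOn_of_bMuMonotonic (bMuMonotonic_of_monotonicMIndependent hμ
      (monotonicMIndependent_of_filterRepresentation hF hrep)) hD.1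

/-- **Proposition 2.** A social welfare function on profiles of total preorders is
strategy-proof on every rich domain of locally unimodal preorders (w.r.t. the median
betweenness of the semilattice of total preorders) iff there is a family of order
filters `F m`, one for each meet-irreducible `m`, such that `f(R_N)` is the
intersection of all meet-irreducible total preorders `m` with `{i : R_i ⊆ m} ∈ F m`. -/
theorem swf_strategyProof_iff_filterRepresentation
    (A : Type*) [Fintype A] [Nonempty A] {N : Type*} [Fintype N] [DecidableEq N]
    (μ : TotalPreorderOn A → TotalPreorderOn A → TotalPreorderOn A → TotalPreorderOn A)
    (hμ : IsMedianFn μ)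
    (f : (N → TotalPreorderOn A) → TotalPreorderOn A) :
    (∀ D : Set (Pref (TotalPreorderOn A)), RichDomain μ D → StrategyProofOn f D) ↔
      ∃ F : TotalPreorderOn A → Set (Set N),
        (∀ m, MeetIrred m → OrderFilterN (F m)) ∧
        ∀ (R : N → TotalPreorderOn A) (a b : A),
          (f R).1 a b ↔
            ∀ m : TotalPreorderOn A, MeetIrred m → {i | R i ≤ m} ∈ F m → m.1 a b :=
  swf_strategyProof_iff_filterRepresentation_general A μ hμ f
end

section
/- Let A be a nonempty finite set, (R_A^T,∨) the median join-semilattice of total preorders on A with meet-irreducibles M, and let f = f_{{F_m : m ∈ M}} be the aggregation rule defined by f(R_N) = ⋂{ m ∈ M : {i ∈ N : R_i ⊆ m} ∈ F_m }, where for every m ∈ M the family F_m is a nontrivial proper order filter of (P(N),⊆) (i.e. ∅ ∉ F_m and F_m ≠ ∅). Then f satisfies the Basic Pareto Principle: for every x,y ∈ A and every profile R_N of total preorders, if x R_i y for every i ∈ N then x f(R_N) y. -/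
/-- If every `F m` (for `m` meet-irreducible) is a nontrivial proper order filter
(`∅ ∉ F m ≠ ∅`) and `f` is the rule `f(R_N) = ⋂{m meet-irreducible : {i : R_i ⊆ m} ∈ F m}`,
then `f` satisfies the Basic Pareto Principle: if every agent weakly prefers `x` to `y`,
so does the social preference. -/
theorem filterRule_basicPareto
    (A : Type*) [Fintype A] [Nonempty A] {N : Type*} [Fintype N]
    (F : TotalPreorderOn A → Set (Set N))
    (hF : ∀ m : TotalPreorderOn A, MeetIrred m →
      OrderFilterN (F m) ∧ (∅ : Set N) ∉ F m ∧ (F m).Nonempty)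
    (f : (N → TotalPreorderOn A) → TotalPreorderOn A)
    (hf : ∀ (R : N → TotalPreorderOn A) (a b : A),
      (f R).1 a b ↔
        ∀ m : TotalPreorderOn A, MeetIrred m → {i | R i ≤ m} ∈ F m → m.1 a b) :
    ∀ (x y : A) (R : N → TotalPreorderOn A), (∀ i, (R i).1 x y) → (f R).1 x y := by
  intro x y R hR
  rw [hf]
  intro m hm hmem
  have hne : {i | R i ≤ m} ≠ ∅ := fun h => (hF m hm).2.1 (h ▸ hmem)
  obtain ⟨i, hi⟩ := Set.nonempty_iff_ne_empty.mpr hne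
  exact hi x y (hR i)
end

section
/- Let A be a nonempty finite set. Let T_A be the set of all generalized weak tournaments on A (reflexive and connected binary relations) and T_A° the set of all generalized strict tournaments on A (irreflexive and connected binary relations), each ordered by set inclusion with join given by set-theoretic union. Then both (T_A, ∪) and (T_A°, ∪) are finite median join-semilattices (they are join-semilattices satisfying upper distributivity and meet-Helly), and the map ψ : T_A → T_A° defined by ψ(T) = T ∖ Δ_A, where Δ_A = {(x,x) : x ∈ A}, is an isomorphism of join-semilattices between them. -/
/-- Generalized weak tournaments on `A`: reflexive and connected binary relations. -/
def WeakTournamentOn (A : Type*) : Type _ :=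
  {R : A → A → Prop // Reflexive R ∧ ∀ a b : A, a ≠ b → R a b ∨ R b a}

/-- Generalized strict tournaments on `A`: irreflexive and connected binary relations. -/
def StrictTournamentOn (A : Type*) : Type _ :=
  {R : A → A → Prop // Irreflexive R ∧ ∀ a b : A, a ≠ b → R a b ∨ R b a}

namespace WeakTournamentOn

variable {A : Type*}

instance : PartialOrder (WeakTournamentOn A) where
  le R S := ∀ a b, R.1 a b → S.1 a b
  le_refl R := fun _ _ h => h
  le_trans R S T h₁ h₂ := fun a b h => h₂ a b (h₁ a b h)
  le_antisymm R S h₁ h₂ :=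
    Subtype.ext (funext fun a => funext fun b => propext ⟨h₁ a b, h₂ a b⟩)

/-- The join (set-theoretic union) of two generalized weak tournaments. -/
instance : SemilatticeSup (WeakTournamentOn A) where
  sup R S := ⟨fun a b => R.1 a b ∨ S.1 a b, fun a => Or.inl (R.2.1 a),
    fun a b hab => (R.2.2 a b hab).imp Or.inl Or.inl⟩
  le_sup_left R S := fun _ _ h => Or.inl h
  le_sup_right R S := fun _ _ h => Or.inr h
  sup_le R S T h₁ h₂ := fun a b h => h.elim (h₁ a b) (h₂ a b)

end WeakTournamentOn

namespace StrictTournamentOn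

variable {A : Type*}

instance : PartialOrder (StrictTournamentOn A) where
  le R S := ∀ a b, R.1 a b → S.1 a b
  le_refl R := fun _ _ h => h
  le_trans R S T h₁ h₂ := fun a b h => h₂ a b (h₁ a b h)
  le_antisymm R S h₁ h₂ :=
    Subtype.ext (funext fun a => funext fun b => propext ⟨h₁ a b, h₂ a b⟩)

/-- The join (set-theoretic union) of two generalized strict tournaments. -/
instance : SemilatticeSup (StrictTournamentOn A) where
  sup R S := ⟨fun a b => R.1 a b ∨ S.1 a b,
    fun a h => h.elim (R.2.1 a) (S.2.1 a),
    fun a b hab => (R.2.2 a b hab).imp Or.inl Or.inl⟩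
  le_sup_left R S := fun _ _ h => Or.inl h
  le_sup_right R S := fun _ _ h => Or.inr h
  sup_le R S T h₁ h₂ := fun a b h => h.elim (h₁ a b) (h₂ a b)

end StrictTournamentOn

/-- The map `ψ(T) = T ∖ Δ_A` deleting the diagonal from a weak tournament. -/
def tournamentIso {A : Type*} (T : WeakTournamentOn A) : StrictTournamentOn A :=
  ⟨fun a b => T.1 a b ∧ a ≠ b,
    fun _ h => h.2 rfl,
    fun a b hab => (T.2.2 a b hab).imp (fun h => ⟨h, hab⟩) (fun h => ⟨h, hab.symm⟩)⟩

namespace WeakTournamentOn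

lemma glb_eq {A : Type*} {y z m w : WeakTournamentOn A} (h : IsGLB {y, z} m)
    (hw : ∀ a b, w.1 a b ↔ y.1 a b ∧ z.1 a b) : m = w := by
  have hy : m ≤ y := h.1 (Set.mem_insert _ _)
  have hz : m ≤ z := h.1 (Set.mem_insert_of_mem _ rfl)
  refine le_antisymm (fun a b hab => (hw a b).2 ⟨hy a b hab, hz a b hab⟩) ?_
  refine h.2 ?_
  intro t ht
  rcases ht with rfl | ht
  · exact fun a b hab => ((hw a b).1 hab).1
  · rcases ht with rfl; exact fun a b hab => ((hw a b).1 hab).2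

lemma glb_conn {A : Type*} {y z : WeakTournamentOn A} (h : ∃ m, IsGLB {y, z} m) :
    ∀ a b : A, a ≠ b → (y.1 a b ∧ z.1 a b) ∨ (y.1 b a ∧ z.1 b a) := by
  rcases h with ⟨m, hm⟩
  have hy : m ≤ y := hm.1 (Set.mem_insert _ _)
  have hz : m ≤ z := hm.1 (Set.mem_insert_of_mem _ rfl)
  intro a b hab
  exact (m.2.2 a b hab).imp (fun h => ⟨hy a b h, hz a b h⟩) (fun h => ⟨hy b a h, hz b a h⟩)

end WeakTournamentOn

namespace StrictTournamentOn

lemma glb_eq {A : Type*} {y z m w : StrictTournamentOn A} (h : IsGLB {y, z} m)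
    (hw : ∀ a b, w.1 a b ↔ y.1 a b ∧ z.1 a b) : m = w := by
  have hy : m ≤ y := h.1 (Set.mem_insert _ _)
  have hz : m ≤ z := h.1 (Set.mem_insert_of_mem _ rfl)
  refine le_antisymm (fun a b hab => (hw a b).2 ⟨hy a b hab, hz a b hab⟩) ?_
  refine h.2 ?_
  intro t ht
  rcases ht with rfl | ht
  · exact fun a b hab => ((hw a b).1 hab).1
  · rcases ht with rfl; exact fun a b hab => ((hw a b).1 hab).2

lemma glb_conn {A : Type*} {y z : StrictTournamentOn A} (h : ∃ m, IsGLB {y, z} m) :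
    ∀ a b : A, a ≠ b → (y.1 a b ∧ z.1 a b) ∨ (y.1 b a ∧ z.1 b a) := by
  rcases h with ⟨m, hm⟩
  have hy : m ≤ y := hm.1 (Set.mem_insert _ _)
  have hz : m ≤ z := hm.1 (Set.mem_insert_of_mem _ rfl)
  intro a b hab
  exact (m.2.2 a b hab).imp (fun h => ⟨hy a b h, hz a b h⟩) (fun h => ⟨hy b a h, hz b a h⟩)

end StrictTournamentOn

/-- **Example 2.** The join-semilattices of generalized weak tournaments and of
generalized strict tournaments on a nonempty finite set `A` (ordered by inclusion with
join the set-theoretic union) are finite median join-semilattices, and the map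
`ψ(T) = T ∖ Δ_A` is an isomorphism of join-semilattices between them. -/
theorem tournaments_median_and_isomorphic (A : Type*) [Fintype A] [Nonempty A] :
    Finite (WeakTournamentOn A) ∧ Finite (StrictTournamentOn A) ∧
    UpperDistributive (WeakTournamentOn A) ∧ MeetHelly (WeakTournamentOn A) ∧
    UpperDistributive (StrictTournamentOn A) ∧ MeetHelly (StrictTournamentOn A) ∧
    Function.Bijective (tournamentIso (A := A)) ∧
    (∀ T T' : WeakTournamentOn A, tournamentIso T ≤ tournamentIso T' ↔ T ≤ T') ∧
    (∀ T T' : WeakTournamentOn A,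
      tournamentIso (T ⊔ T') = tournamentIso T ⊔ tournamentIso T') := by
  refine ⟨?_, ?_, ?_, ?_, ?_, ?_, ⟨?_, ?_⟩, ?_, ?_⟩
  · exact Subtype.finite
  · exact Subtype.finite
  · -- UpperDistributive (weak)
    intro u x y z m₁ m₂ hux huy huz h₁ h₂
    set w₁ : WeakTournamentOn A :=
      ⟨fun a b => y.1 a b ∧ z.1 a b, fun a => ⟨y.2.1 a, z.2.1 a⟩,
        fun a b hab => (u.2.2 a b hab).imp
          (fun h => ⟨huy a b h, huz a b h⟩) (fun h => ⟨huy b a h, huz b a h⟩)⟩ with hw₁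
    set w₂ : WeakTournamentOn A :=
      ⟨fun a b => (x ⊔ y).1 a b ∧ (x ⊔ z).1 a b,
        fun a => ⟨Or.inl (x.2.1 a), Or.inl (x.2.1 a)⟩,
        fun a b hab => (u.2.2 a b hab).imp
          (fun h => ⟨Or.inl (hux a b h), Or.inl (hux a b h)⟩)
          (fun h => ⟨Or.inl (hux b a h), Or.inl (hux b a h)⟩)⟩ with hw₂
    have e₁ : m₁ = w₁ := WeakTournamentOn.glb_eq h₁ (fun a b => Iff.rfl)
    have e₂ : m₂ = w₂ := WeakTournamentOn.glb_eq h₂ (fun a b => Iff.rfl)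
    subst e₁ e₂
    apply Subtype.ext
    funext a b
    show (x.1 a b ∨ (y.1 a b ∧ z.1 a b)) = ((x.1 a b ∨ y.1 a b) ∧ (x.1 a b ∨ z.1 a b))
    exact propext (by tauto)
  · -- MeetHelly (weak)
    intro x y z hxy hyz hxz
    have cxy := WeakTournamentOn.glb_conn hxy
    have cyz := WeakTournamentOn.glb_conn hyz
    have cxz := WeakTournamentOn.glb_conn hxz
    refine ⟨⟨fun a b => x.1 a b ∧ y.1 a b ∧ z.1 a b,
      fun a => ⟨x.2.1 a, y.2.1 a, z.2.1 a⟩, fun a b hab => ?_⟩, ?_, ?_⟩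
    · have h1 := cxy a b hab; have h2 := cyz a b hab; have h3 := cxz a b hab
      tauto
    · rintro t (rfl | rfl | rfl)
      · exact fun a b h => h.1
      · exact fun a b h => h.2.1
      · exact fun a b h => h.2.2
    · intro n hn
      have hx : n ≤ x := hn (Set.mem_insert _ _)
      have hy : n ≤ y := hn (Set.mem_insert_of_mem _ (Set.mem_insert _ _))
      have hz : n ≤ z := hn (Set.mem_insert_of_mem _ (Set.mem_insert_of_mem _ rfl))
      exact fun a b h => ⟨hx a b h, hy a b h, hz a b h⟩
  · -- UpperDistributive (strict)
    intro u x y z m₁ m₂ hux huy huz h₁ h₂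
    set w₁ : StrictTournamentOn A :=
      ⟨fun a b => y.1 a b ∧ z.1 a b, fun a h => y.2.1 a h.1,
        fun a b hab => (u.2.2 a b hab).imp
          (fun h => ⟨huy a b h, huz a b h⟩) (fun h => ⟨huy b a h, huz b a h⟩)⟩ with hw₁
    set w₂ : StrictTournamentOn A :=
      ⟨fun a b => (x ⊔ y).1 a b ∧ (x ⊔ z).1 a b,
        fun a h => h.1.elim (x.2.1 a) (y.2.1 a),
        fun a b hab => (u.2.2 a b hab).imp
          (fun h => ⟨Or.inl (hux a b h), Or.inl (hux a b h)⟩)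
          (fun h => ⟨Or.inl (hux b a h), Or.inl (hux b a h)⟩)⟩ with hw₂
    have e₁ : m₁ = w₁ := StrictTournamentOn.glb_eq h₁ (fun a b => Iff.rfl)
    have e₂ : m₂ = w₂ := StrictTournamentOn.glb_eq h₂ (fun a b => Iff.rfl)
    subst e₁ e₂
    apply Subtype.ext
    funext a b
    show (x.1 a b ∨ (y.1 a b ∧ z.1 a b)) = ((x.1 a b ∨ y.1 a b) ∧ (x.1 a b ∨ z.1 a b))
    exact propext (by tauto)
  · -- MeetHelly (strict)
    intro x y z hxy hyz hxz
    have cxy := StrictTournamentOn.glb_conn hxy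
    have cyz := StrictTournamentOn.glb_conn hyz
    have cxz := StrictTournamentOn.glb_conn hxz
    refine ⟨⟨fun a b => x.1 a b ∧ y.1 a b ∧ z.1 a b,
      fun a h => x.2.1 a h.1, fun a b hab => ?_⟩, ?_, ?_⟩
    · have h1 := cxy a b hab; have h2 := cyz a b hab; have h3 := cxz a b hab
      tauto
    · rintro t (rfl | rfl | rfl)
      · exact fun a b h => h.1
      · exact fun a b h => h.2.1
      · exact fun a b h => h.2.2
    · intro n hn
      have hx : n ≤ x := hn (Set.mem_insert _ _)
      have hy : n ≤ y := hn (Set.mem_insert_of_mem _ (Set.mem_insert _ _))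
      have hz : n ≤ z := hn (Set.mem_insert_of_mem _ (Set.mem_insert_of_mem _ rfl))
      exact fun a b h => ⟨hx a b h, hy a b h, hz a b h⟩
  · -- injective
    intro T T' h
    apply Subtype.ext
    funext a b
    apply propext
    have h2 : (T.1 a b ∧ a ≠ b) = (T'.1 a b ∧ a ≠ b) :=
      congrFun (congrFun (congrArg Subtype.val h) a) b
    by_cases hab : a = b
    · subst hab; exact ⟨fun _ => T'.2.1 a, fun _ => T.2.1 a⟩
    · constructor
      · intro ht; exact ((iff_of_eq h2).1 ⟨ht, hab⟩).1
      · intro ht; exact ((iff_of_eq h2).2 ⟨ht, hab⟩).1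
  · -- surjective
    intro S
    refine ⟨⟨fun a b => S.1 a b ∨ a = b, fun a => Or.inr rfl,
      fun a b hab => (S.2.2 a b hab).imp Or.inl Or.inl⟩, ?_⟩
    apply Subtype.ext
    funext a b
    apply propext
    constructor
    · rintro ⟨h | h, hne⟩
      · exact h
      · exact absurd h hne
    · intro h
      exact ⟨Or.inl h, fun e => S.2.1 b (e ▸ h)⟩
  · -- order embedding
    intro T T'
    constructor
    · intro h a b hab
      by_cases hne : a = b
      · subst hne; exact T'.2.1 a
      · exact (h a b ⟨hab, hne⟩).1
    · rintro h a b ⟨hab, hne⟩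
      exact ⟨h a b hab, hne⟩
  · -- preserves sup
    intro T T'
    apply Subtype.ext
    funext a b
    show ((T.1 a b ∨ T'.1 a b) ∧ a ≠ b) = ((T.1 a b ∧ a ≠ b) ∨ (T'.1 a b ∧ a ≠ b))
    exact propext (by tauto)
end
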